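/- arXiv:2410.13971 — 3 statements merged into one kernel-verified Lean document; each statement's English description precedes it below -/
import Mathlib

section
/- Let G = e be the trivial group and let B be a path-connected topological space with b ∈ B. Then RO(ΠB) is isomorphic to ℤ × Hom(π₁(B,b), ℤ/2), where a class γ of virtual dimension p corresponds to the pair (p, m_γ) with m_γ : π₁(B,b) → {±1} the homomorphism given by the action of γ on endomorphisms of the object b, under the identification of the endomorphisms of the virtual bundle ℝ^p in vV with O(1) = {±1} via orientation behavior. -/
/-!
STATEMENT 7. Let `G = e` be the trivial group and `B` a path-connected space with
`b ∈ B`.  Then `RO(ΠB) ≅ ℤ × Hom(π₁(B,b), ℤ/2)`, where a class `γ` of virtual dimension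
`p` corresponds to `(p, m_γ)`, with `m_γ : π₁(B,b) → {±1}` the homomorphism given by the
action of `γ` on the endomorphisms of the object `b`, under the identification of the
endomorphisms of the virtual bundle `ℝ^p` in `vV` with `O(1) = {±1}` via orientation
behaviour.

For the trivial group, `ΠB` is the ordinary fundamental groupoid of `B` (Mathlib's
`FundamentalGroupoid B`).  We model `vV = ∐ₙ vV(n)` (virtual real vector bundles over a
point) as the category `VV` with one object per virtual dimension `n ∈ ℤ` and, per the
standard identification, morphism sets `O(1) = ℤˣ` between objects of equal dimension
(and no morphisms otherwise).  A representation of `ΠB` is a functor `ΠB ⥤ VV`, and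
`RO(ΠB)` is the set of such functors up to natural isomorphism, an abelian group under
the direct sum (`dsumV` below: dimensions add, orientation signs multiply).
-/

open CategoryTheory

/-- The category `vV` of virtual real vector bundles over a point: objects are virtual
dimensions `n ∈ ℤ`; morphisms exist only between equal dimensions and are recorded by
their orientation behaviour in `O(1) = ℤˣ`. -/
structure VV : Type where
  dim : ℤ

instance : Category VV where
  Hom p q := {u : ℤˣ // p.dim = q.dim}
  id _ := ⟨1, rfl⟩
  comp f g := ⟨f.1 * g.1, f.2.trans g.2⟩
  id_comp f := by apply Subtype.ext; exact one_mul _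
  comp_id f := by apply Subtype.ext; exact mul_one _
  assoc f g h := by apply Subtype.ext; exact mul_assoc _ _ _

variable (B : Type) [TopologicalSpace B]

/-- Representations of the fundamental groupoid `ΠB`: functors `ΠB ⥤ vV`. -/
abbrev RepPi : Type := FundamentalGroupoid B ⥤ VV

/-- `RO(ΠB)`: representations up to natural isomorphism. -/
def ROPi : Type := Quotient (CategoryTheory.isIsomorphicSetoid (RepPi B))

/-- Direct sum of representations: dimensions add, orientation signs multiply. -/
def dsumV (F G : RepPi B) : RepPi B where
  obj x := ⟨(F.obj x).dim + (G.obj x).dim⟩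
  map f := ⟨(F.map f).1 * (G.map f).1, by
    show (F.obj _).dim + (G.obj _).dim = (F.obj _).dim + (G.obj _).dim
    rw [(F.map f).2, (G.map f).2]⟩
  map_id x := by
    apply Subtype.ext
    show (F.map (𝟙 x)).1 * (G.map (𝟙 x)).1 = (1 : ℤˣ)
    rw [F.map_id, G.map_id]
    exact one_mul _
  map_comp f g := by
    apply Subtype.ext
    show (F.map (f ≫ g)).1 * (G.map (f ≫ g)).1 = _
    rw [F.map_comp, G.map_comp]
    show (F.map f).1 * (F.map g).1 * ((G.map f).1 * (G.map g).1)
      = (F.map f).1 * (G.map f).1 * ((F.map g).1 * (G.map g).1)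
    simp [mul_comm, mul_left_comm, mul_assoc]

section Aux

attribute [local instance] Path.Homotopic.setoid

variable {B} [PathConnectedSpace B] (b : B)

open scoped Classical

set_option linter.unusedSectionVars false

/-- an iso in `VV` from a unit and a dimension equality -/
def VVisoMk {x y : VV} (u : ℤˣ) (h : x.dim = y.dim) : x ≅ y where
  hom := ⟨u, h⟩
  inv := ⟨u⁻¹, h.symm⟩
  hom_inv_id := Subtype.ext (by show u * u⁻¹ = 1; group)
  inv_hom_id := Subtype.ext (by show u⁻¹ * u = 1; group)

/-- a chosen morphism from the basepoint to each object, the identity at the basepoint -/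
noncomputable def tpath (x : FundamentalGroupoid B) : (⟨b⟩ : FundamentalGroupoid B) ⟶ x :=
  if h : x = ⟨b⟩ then eqToHom h.symm
  else Quotient.mk _ (PathConnectedSpace.somePath b x.as)

lemma tpath_self : tpath b ⟨b⟩ = 𝟙 (⟨b⟩ : FundamentalGroupoid B) := by
  rw [tpath]; exact dif_pos rfl

/-- package a loop at `b` as an element of the fundamental group -/
noncomputable def toFG (g : (⟨b⟩ : FundamentalGroupoid B) ⟶ ⟨b⟩) : FundamentalGroup B b :=
  FundamentalGroup.fromArrow g

lemma toFG_hom (g : (⟨b⟩ : FundamentalGroupoid B) ⟶ ⟨b⟩) : FundamentalGroup.toArrow (toFG b g) = g := rfl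

lemma toFG_id : toFG b (𝟙 _) = 1 := rfl

lemma toFG_comp (g h : (⟨b⟩ : FundamentalGroupoid B) ⟶ ⟨b⟩) :
    toFG b (g ≫ h) = toFG b h * toFG b g := rfl

lemma toFG_aut (ℓ : FundamentalGroup B b) : toFG b (FundamentalGroup.toArrow ℓ) = ℓ := rfl

/-- the monodromy homomorphism of a representation -/
noncomputable def mono (γ : RepPi B) : FundamentalGroup B b →* ℤˣ where
  toFun ℓ := (γ.map (FundamentalGroup.toArrow ℓ)).1
  map_one' := by
    show (γ.map (𝟙 (⟨b⟩ : FundamentalGroupoid B))).1 = 1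
    rw [γ.map_id]; rfl
  map_mul' ℓ₁ ℓ₂ := by
    show (γ.map ((FundamentalGroup.toArrow ℓ₂) ≫ (FundamentalGroup.toArrow ℓ₁))).1 = _
    rw [γ.map_comp]
    show (γ.map (FundamentalGroup.toArrow ℓ₂)).1 * (γ.map (FundamentalGroup.toArrow ℓ₁)).1 = _
    exact mul_comm _ _

lemma map_groupoid_inv (γ : RepPi B) {x y : FundamentalGroupoid B} (h : x ⟶ y) :
    (γ.map (Groupoid.inv h)).1 = ((γ.map h).1)⁻¹ := by
  have : (γ.map (Groupoid.inv h ≫ h)).1 = 1 := by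
    rw [Groupoid.inv_comp, γ.map_id]; rfl
  rw [γ.map_comp] at this
  have : (γ.map (Groupoid.inv h)).1 * (γ.map h).1 = 1 := this
  exact eq_inv_of_mul_eq_one_left this

/-- the representation with constant dimension `p` and monodromy `m` -/
noncomputable def Fm (p : ℤ) (m : FundamentalGroup B b →* ℤˣ) : RepPi B where
  obj _ := ⟨p⟩
  map {x y} f := ⟨m (toFG b (tpath b x ≫ f ≫ Groupoid.inv (tpath b y))), rfl⟩
  map_id x := by
    apply Subtype.ext
    show m (toFG b (tpath b x ≫ 𝟙 x ≫ Groupoid.inv (tpath b x))) = 1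
    rw [Category.id_comp, Groupoid.comp_inv, toFG_id, map_one]
  map_comp {x y z} f g := by
    apply Subtype.ext
    show m (toFG b (tpath b x ≫ (f ≫ g) ≫ Groupoid.inv (tpath b z)))
      = m (toFG b (tpath b x ≫ f ≫ Groupoid.inv (tpath b y)))
        * m (toFG b (tpath b y ≫ g ≫ Groupoid.inv (tpath b z)))
    have : tpath b x ≫ (f ≫ g) ≫ Groupoid.inv (tpath b z)
        = (tpath b x ≫ f ≫ Groupoid.inv (tpath b y))
          ≫ (tpath b y ≫ g ≫ Groupoid.inv (tpath b z)) := by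
      simp
    rw [this, toFG_comp, map_mul, mul_comm]

/-- the invariant of a representation -/
noncomputable def phi (γ : RepPi B) : ℤ × (FundamentalGroup B b →* ℤˣ) :=
  ((γ.obj ⟨b⟩).dim, mono b γ)

lemma phi_sound (γ γ' : RepPi B) (h : Nonempty (γ ≅ γ')) : phi b γ = phi b γ' := by
  obtain ⟨η⟩ := h
  refine Prod.ext ((η.hom.app ⟨b⟩).2) (MonoidHom.ext fun ℓ => ?_)
  have := η.hom.naturality (FundamentalGroup.toArrow ℓ)
  have h2 : (γ.map (FundamentalGroup.toArrow ℓ)).1 * (η.hom.app ⟨b⟩).1 = (η.hom.app ⟨b⟩).1 * (γ'.map (FundamentalGroup.toArrow ℓ)).1 :=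
    congrArg Subtype.val this
  show (γ.map (FundamentalGroup.toArrow ℓ)).1 = (γ'.map (FundamentalGroup.toArrow ℓ)).1
  have hu := (η.hom.app (⟨b⟩ : FundamentalGroupoid B)).1
  calc (γ.map (FundamentalGroup.toArrow ℓ)).1
      = (γ.map (FundamentalGroup.toArrow ℓ)).1 * (η.hom.app ⟨b⟩).1 * ((η.hom.app ⟨b⟩).1)⁻¹ := by group
    _ = (η.hom.app ⟨b⟩).1 * (γ'.map (FundamentalGroup.toArrow ℓ)).1 * ((η.hom.app ⟨b⟩).1)⁻¹ := by rw [h2]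
    _ = (γ'.map (FundamentalGroup.toArrow ℓ)).1 := by
        rw [mul_comm (η.hom.app ⟨b⟩).1 (γ'.map (FundamentalGroup.toArrow ℓ)).1]; group

/-- every representation is isomorphic to the standard one with its invariants -/
noncomputable def stdIso (γ : RepPi B) : γ ≅ Fm b (γ.obj ⟨b⟩).dim (mono b γ) := by
  refine NatIso.ofComponents
    (fun x => VVisoMk ((γ.map (tpath b x)).1)⁻¹ ((γ.map (tpath b x)).2).symm)
    (fun {x y} f => ?_)
  apply Subtype.ext
  show (γ.map f).1 * ((γ.map (tpath b y)).1)⁻¹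
      = ((γ.map (tpath b x)).1)⁻¹
        * (mono b γ) (toFG b (tpath b x ≫ f ≫ Groupoid.inv (tpath b y)))
  have : (mono b γ) (toFG b (tpath b x ≫ f ≫ Groupoid.inv (tpath b y)))
      = (γ.map (tpath b x ≫ f ≫ Groupoid.inv (tpath b y))).1 := rfl
  rw [this, γ.map_comp, γ.map_comp]
  show (γ.map f).1 * ((γ.map (tpath b y)).1)⁻¹
      = ((γ.map (tpath b x)).1)⁻¹
        * ((γ.map (tpath b x)).1 * ((γ.map f).1 * (γ.map (Groupoid.inv (tpath b y))).1))
  rw [map_groupoid_inv]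
  group

lemma phi_Fm (p : ℤ) (m : FundamentalGroup B b →* ℤˣ) : phi b (Fm b p m) = (p, m) := by
  refine Prod.ext rfl (MonoidHom.ext fun ℓ => ?_)
  show ((Fm b p m).map (FundamentalGroup.toArrow ℓ)).1 = m ℓ
  show m (toFG b (tpath b ⟨b⟩ ≫ (FundamentalGroup.toArrow ℓ) ≫ Groupoid.inv (tpath b ⟨b⟩))) = m ℓ
  rw [tpath_self]
  have h1 : Groupoid.inv (𝟙 (⟨b⟩ : FundamentalGroupoid B)) = 𝟙 _ := by simp
  rw [h1, Category.id_comp, Category.comp_id, toFG_aut]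

end Aux

theorem stmt7 [PathConnectedSpace B] (b : B) :
    ∃ e : ROPi B ≃ (ℤ × (FundamentalGroup B b →* ℤˣ)),
      -- the class of a representation `γ` corresponds to the pair
      -- `(virtual dimension of γ, monodromy homomorphism m_γ)`:
      (∀ γ : RepPi B,
        (e (Quotient.mk _ γ)).1 = (γ.obj ⟨b⟩).dim ∧
        ∀ ℓ : FundamentalGroup B b, (e (Quotient.mk _ γ)).2 ℓ = (γ.map (FundamentalGroup.toArrow ℓ)).1) ∧
      -- and `e` is additive for the direct sum, i.e. `RO(ΠB) ≅ ℤ × Hom(π₁(B,b), ℤ/2)`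
      -- as abelian groups:
      (∀ γ γ' : RepPi B,
        e (Quotient.mk _ (dsumV B γ γ'))
          = ((e (Quotient.mk _ γ)).1 + (e (Quotient.mk _ γ')).1,
             (e (Quotient.mk _ γ)).2 * (e (Quotient.mk _ γ')).2)) := by
  classical
  refine ⟨{
    toFun := Quotient.lift (phi b) (fun γ γ' h => phi_sound b γ γ' h)
    invFun := fun pm => Quotient.mk _ (Fm b pm.1 pm.2)
    left_inv := ?_
    right_inv := fun pm => by simpa using congrArg id (phi_Fm b pm.1 pm.2)
  }, ?_, ?_⟩
  · intro q
    induction q using Quotient.ind with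
    | _ γ =>
      show Quotient.mk _ (Fm b (phi b γ).1 (phi b γ).2) = Quotient.mk _ γ
      exact Quotient.sound ⟨(stdIso b γ).symm⟩
  · intro γ
    exact ⟨rfl, fun ℓ => rfl⟩
  · intro γ γ'
    refine Prod.ext rfl (MonoidHom.ext fun ℓ => ?_)
    rfl
end

section
/- Let G be a finite group and B a G-space. The category BFin^G_B has pullbacks and finite coproducts, and pullbacks distribute over finite coproducts. Explicitly, the coproduct of x : X → B and y : Y → B is the disjoint union X ⊔ Y → B; and given morphisms f_x = (α_x, ω_x) : x → z and f_y = (α_y, ω_y) : y → z, the object x×_z y : X×_Z Y → B defined on the set-level pullback X×_Z Y of α_x and α_y by z∘α_x∘π_X, together with the projection morphisms (π_X, reverse of ω_x∘(π_X×id)) and (π_Y, reverse of ω_y∘(π_Y×id)), is a pullback of f_x and f_y in BFin^G_B. -/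
/-!
STATEMENT 11. Let `G` be a finite group and `B` a `G`-space.  The category `BFin^G_B`
has pullbacks and finite coproducts, and pullbacks distribute over finite coproducts.
Explicitly, the coproduct of `x : X → B` and `y : Y → B` is the disjoint union
`X ⊔ Y → B`; and given morphisms `f_x = (α_x, ω_x) : x → z`, `f_y = (α_y, ω_y) : y → z`,
the object `x ×_z y : X ×_Z Y → B` defined on the set-level pullback of `α_x`, `α_y` by
`z ∘ α_x ∘ π_X`, with projections `(π_X, reverse of ω_x ∘ (π_X × id))` and
`(π_Y, reverse of ω_y ∘ (π_Y × id))`, is a pullback of `f_x` and `f_y` in `BFin^G_B`.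

Objects of `BFin^G_B` are `G`-maps `x : X → B` with `X` a finite (discrete) `G`-set;
morphisms `x → y` are pairs `(α, ω)` with `α : X → Y` a `G`-map and `ω` a `G`-homotopy
from `x` to `y ∘ α` (recorded, since `X` is discrete, as an equivariant family of paths
`ω a : x(a) ⟶ y(α(a))`), modulo `G`-homotopy rel `X × {0,1}`.  Composition is
`(α, ω) ∘ (α', ω') = (α ∘ α', (ω∘(α'×id)) ⋆ ω')`; since composition on the quotient is
determined by its values on representatives, we state all universal properties for an
arbitrary composition operation `comp` satisfying `comp ⟦f⟧ ⟦g⟧ = ⟦compRep f g⟧`.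
-/

open unitInterval

set_option linter.unusedSectionVars false

variable (G : Type) [Group G] [Finite G] (B : Type) [TopologicalSpace B] [MulAction G B]
  [ContinuousConstSMul G B]

/-- An object of `BFin^G_B`: a `G`-map `x : X → B` from a finite (discrete) `G`-set. -/
structure BObj : Type 1 where
  X : Type
  [fin : Finite X]
  [act : MulAction G X]
  map : X → B
  eqv : ∀ (g : G) (a : X), map (g • a) = g • map a

attribute [instance] BObj.fin BObj.act

variable {G B}

/-- A representative morphism `(α, ω) : x → y` of `BFin^G_B`: a `G`-map `α` and a
`G`-homotopy from `x` to `y ∘ α`, recorded as an equivariant family of paths. -/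
structure HomRep (x y : BObj G B) : Type where
  α : x.X → y.X
  hα : ∀ (g : G) (a : x.X), α (g • a) = g • α a
  ω : ∀ a : x.X, Path (x.map a) (y.map (α a))
  hω : ∀ (g : G) (a : x.X) (t : I), ω (g • a) t = g • ω a t

/-- Two representatives are identified when `α = α'` and the homotopies are
`G`-homotopic rel `X × {0,1}`. -/
def HRel {x y : BObj G B} (f f' : HomRep x y) : Prop :=
  f.α = f'.α ∧
  ∃ K : x.X → I → I → B,
    (∀ a, Continuous fun p : I × I => K a p.1 p.2) ∧
    (∀ (g : G) (a : x.X) (t s : I), K (g • a) t s = g • K a t s) ∧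
    (∀ a t, K a t 0 = f.ω a t) ∧
    (∀ a t, K a t 1 = f'.ω a t) ∧
    (∀ a s, K a 0 s = x.map a) ∧
    (∀ a s, K a 1 s = y.map (f.α a))

/-- The morphism set of `BFin^G_B`. -/
def HomQ (x y : BObj G B) : Type := Quot (HRel (x := x) (y := y))

/-- Composition of representatives: `(α', ω') : x → y` followed by `(α, ω) : y → z` is
`(α ∘ α', (ω ∘ (α' × id)) ⋆ ω')`. -/
noncomputable def compRep {x y z : BObj G B} (f : HomRep x y) (g : HomRep y z) : HomRep x z where
  α := g.α ∘ f.α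
  hα gg a := by simp [Function.comp, f.hα, g.hα]
  ω a := (f.ω a).trans (g.ω (f.α a))
  hω := by
    intro gg a t
    have h2 : ∀ t' : I, g.ω (f.α (gg • a)) t' = gg • g.ω (f.α a) t' := by
      intro t'
      rw [f.hα, g.hω]
    rw [Path.trans_apply, Path.trans_apply]
    split_ifs with h
    · rw [f.hω]
    · rw [h2]

/-- The identity representative. -/
def idRep (x : BObj G B) : HomRep x x where
  α := id
  hα _ _ := rfl
  ω a := Path.refl (x.map a)
  hω gg a t := by simp [x.eqv]

section constructions

variable (x y z : BObj G B)

/-- The `G`-action on a disjoint union. -/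
instance sumAct : MulAction G (x.X ⊕ y.X) where
  smul g := Sum.map (g • ·) (g • ·)
  one_smul a := by rcases a with a | a <;> simp [Sum.map]
  mul_smul g h a := by rcases a with a | a <;> simp [Sum.map, mul_smul]

theorem smul_inl (g : G) (a : x.X) :
    (g • (Sum.inl a : x.X ⊕ y.X)) = Sum.inl (g • a) := rfl

theorem smul_inr (g : G) (a : y.X) :
    (g • (Sum.inr a : x.X ⊕ y.X)) = Sum.inr (g • a) := rfl

/-- The coproduct object `x ⊔ y : X ⊔ Y → B`. -/
def cop : BObj G B where
  X := x.X ⊕ y.X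
  map := Sum.elim x.map y.map
  eqv g a := by
    rcases a with a | a
    · show x.map (g • a) = g • x.map a
      exact x.eqv g a
    · show y.map (g • a) = g • y.map a
      exact y.eqv g a

/-- The coproduct inclusion `x → x ⊔ y` (with constant homotopy). -/
def inlRep : HomRep x (cop x y) where
  α := Sum.inl
  hα _ _ := rfl
  ω a := Path.refl (x.map a)
  hω gg a t := by
    show x.map (gg • a) = gg • x.map a
    exact x.eqv gg a

/-- The coproduct inclusion `y → x ⊔ y` (with constant homotopy). -/
def inrRep : HomRep y (cop x y) where
  α := Sum.inr
  hα _ _ := rfl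
  ω a := Path.refl (y.map a)
  hω gg a t := by
    show y.map (gg • a) = gg • y.map a
    exact y.eqv gg a

/-- The copairing `[f₁, f₂] : x ⊔ y → w`. -/
def copairRep {w : BObj G B} (f₁ : HomRep x w) (f₂ : HomRep y w) :
    HomRep (cop x y) w where
  α := Sum.elim f₁.α f₂.α
  hα g a := by
    rcases a with a | a
    · show f₁.α (g • a) = g • f₁.α a
      exact f₁.hα g a
    · show f₂.α (g • a) = g • f₂.α a
      exact f₂.hα g a
  ω a :=
    match a with
    | Sum.inl a => f₁.ω a
    | Sum.inr a => f₂.ω a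
  hω g a t := by
    rcases a with a | a
    · show f₁.ω (g • a) t = g • f₁.ω a t
      exact f₁.hω g a t
    · show f₂.ω (g • a) t = g • f₂.ω a t
      exact f₂.hω g a t

variable {x y z}

/-- The pullback object `x ×_z y : X ×_Z Y → B`, with structure map `z ∘ α_x ∘ π_X`. -/
def pb (fx : HomRep x z) (fy : HomRep y z) : BObj G B where
  X := {pr : x.X × y.X // fx.α pr.1 = fy.α pr.2}
  act :=
    { smul := fun g pr => ⟨(g • pr.1.1, g • pr.1.2), by
        show fx.α (g • pr.1.1) = fy.α (g • pr.1.2)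
        rw [fx.hα, fy.hα, pr.2]⟩
      one_smul := fun pr => Subtype.ext (by
        show ((1 : G) • pr.1.1, (1 : G) • pr.1.2) = pr.1
        simp)
      mul_smul := fun g h pr => Subtype.ext (by
        show ((g * h) • pr.1.1, (g * h) • pr.1.2) = (g • h • pr.1.1, g • h • pr.1.2)
        simp [mul_smul]) }
  map pr := z.map (fx.α pr.1.1)
  eqv g pr := by
    show z.map (fx.α (g • pr.1.1)) = _
    rw [fx.hα, z.eqv]

/-- The projection `π_X : x ×_z y → x`, with homotopy the reverse of `ω_x ∘ (π_X×id)`. -/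
noncomputable def pbFst (fx : HomRep x z) (fy : HomRep y z) : HomRep (pb fx fy) x where
  α pr := pr.1.1
  hα _ _ := rfl
  ω pr := (fx.ω pr.1.1).symm
  hω g pr t := by
    show fx.ω (g • pr.1.1) (unitInterval.symm t) = g • fx.ω pr.1.1 (unitInterval.symm t)
    rw [fx.hω]

/-- The projection `π_Y : x ×_z y → y`, with homotopy the reverse of `ω_y ∘ (π_Y×id)`
(transported along the defining equation of the pullback). -/
noncomputable def pbSnd (fx : HomRep x z) (fy : HomRep y z) : HomRep (pb fx fy) y where
  α pr := pr.1.2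
  hα _ _ := rfl
  ω pr := Path.cast (fy.ω pr.1.2).symm
    (by show z.map (fx.α pr.1.1) = z.map (fy.α pr.1.2); rw [pr.2]) rfl
  hω g pr t := by
    show fy.ω (g • pr.1.2) (unitInterval.symm t) = g • fy.ω pr.1.2 (unitInterval.symm t)
    rw [fy.hω]

end constructions

/-! ### Helper infrastructure -/

section St

/-- Clamp a real number into the unit interval. -/
noncomputable def st : ℝ → I := Set.projIcc 0 1 zero_le_one

lemma st_coe (u : ℝ) : (st u : ℝ) = max 0 (min 1 u) := rfl

lemma st_mem {u : ℝ} (h0 : 0 ≤ u) (h1 : u ≤ 1) : (st u : ℝ) = u := by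
  rw [st_coe, min_eq_right h1, max_eq_right h0]

lemma st_eq {u : ℝ} (h0 : 0 ≤ u) (h1 : u ≤ 1) : st u = ⟨u, h0, h1⟩ :=
  Subtype.ext (st_mem h0 h1)

lemma st_I (t : I) : st (t : ℝ) = t := Subtype.ext (st_mem t.2.1 t.2.2)

lemma st_le_zero {u : ℝ} (h : u ≤ 0) : st u = 0 :=
  Subtype.ext (by rw [st_coe, min_eq_right (h.trans zero_le_one), max_eq_left h]; rfl)

lemma st_ge_one {u : ℝ} (h : 1 ≤ u) : st u = 1 :=
  Subtype.ext (by rw [st_coe, min_eq_left h, max_eq_right zero_le_one]; rfl)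

lemma st_zero : st 0 = 0 := st_le_zero le_rfl

lemma st_one : st 1 = 1 := st_ge_one le_rfl

lemma continuous_st : Continuous st := continuous_projIcc

end St

section RT

variable {β : Type*}

/-- Raw concatenation of two unit-interval-parametrised functions. -/
noncomputable def rT (f g : I → β) : I → β := fun t =>
  if (t : ℝ) ≤ 1 / 2 then f (st (2 * (t : ℝ))) else g (st (2 * (t : ℝ) - 1))

/-- Raw reversal. -/
def rS (f : I → β) : I → β := fun t => f (σ t)

lemma rT_zero (f g : I → β) : rT f g 0 = f 0 := by
  simp only [rT, Set.Icc.coe_zero]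
  rw [if_pos (by norm_num), show st (2 * (0:ℝ)) = 0 by rw [mul_zero]; exact st_zero]

lemma rT_one (f g : I → β) : rT f g 1 = g 1 := by
  simp only [rT, Set.Icc.coe_one]
  rw [if_neg (by norm_num), show st (2 * (1:ℝ) - 1) = 1 from st_ge_one (by norm_num)]

lemma rS_zero (f : I → β) : rS f 0 = f 1 := by simp [rS]

lemma rS_one (f : I → β) : rS f 1 = f 0 := by simp [rS]

variable [TopologicalSpace β]

lemma ptrans_coe {u v w : β} (p : Path u v) (q : Path v w) (t : I) :
    (p.trans q) t = rT ⇑p ⇑q t := by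
  rw [Path.trans_apply]
  unfold rT
  split_ifs with h
  · exact congrArg p (st_eq (by linarith [t.2.1]) (by linarith)).symm
  · exact congrArg q (st_eq (by linarith [not_le.mp h]) (by linarith [t.2.2])).symm

lemma psymm_coe {u v : β} (p : Path u v) (t : I) : (p.symm) t = rS ⇑p t := rfl

lemma pcast_coe {u v u' v' : β} (p : Path u v) (hu : u' = u) (hv : v' = v) (t : I) :
    (p.cast hu hv) t = p t := rfl

lemma rT_continuous {f g : I → β} (hf : Continuous f) (hg : Continuous g)
    (hfg : f 1 = g 0) : Continuous (rT f g) := by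
  apply Continuous.if_le
  · exact hf.comp (continuous_st.comp (by fun_prop))
  · exact hg.comp (continuous_st.comp (by fun_prop))
  · exact continuous_subtype_val
  · exact continuous_const
  · intro t ht
    show f (st (2 * (t : ℝ))) = g (st (2 * (t : ℝ) - 1))
    have h2 : 2 * (t : ℝ) = 1 := by rw [ht]; ring
    rw [h2]
    norm_num [st_zero, st_one]
    rw [hfg]

lemma rS_continuous {f : I → β} (hf : Continuous f) : Continuous (rS f) :=
  hf.comp unitInterval.continuous_symm

end RT

section PHtpDefs

/-- A "good family": an equivariant family of continuous maps `I → B`. -/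
def GoodFam (x : BObj G B) (ω : x.X → I → B) : Prop :=
  (∀ a, Continuous (ω a)) ∧ ∀ (g : G) (a : x.X) (t : I), ω (g • a) t = g • ω a t

/-- Equivariant homotopy rel endpoints between two families of paths (as raw maps). -/
def PHtp (x : BObj G B) (ω ω' : x.X → I → B) : Prop :=
  ∃ K : x.X → I → I → B,
    (∀ a, Continuous fun p : I × I => K a p.1 p.2) ∧
    (∀ (g : G) (a : x.X) (t s : I), K (g • a) t s = g • K a t s) ∧
    (∀ a t, K a t 0 = ω a t) ∧ (∀ a t, K a t 1 = ω' a t) ∧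
    (∀ a s, K a 0 s = ω a 0) ∧ (∀ a s, K a 1 s = ω a 1)

lemma goodFam_ω {x y : BObj G B} (f : HomRep x y) : GoodFam x fun a => ⇑(f.ω a) :=
  ⟨fun a => (f.ω a).continuous, f.hω⟩

lemma GoodFam.rT' {x : BObj G B} {f g : x.X → I → B} (hf : GoodFam x f) (hg : GoodFam x g)
    (hfg : ∀ a, f a 1 = g a 0) : GoodFam x fun a => rT (f a) (g a) := by
  refine ⟨fun a => rT_continuous (hf.1 a) (hg.1 a) (hfg a), fun gg a t => ?_⟩
  unfold rT
  dsimp only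
  split_ifs
  · exact hf.2 gg a _
  · exact hg.2 gg a _

lemma GoodFam.rS' {x : BObj G B} {f : x.X → I → B} (hf : GoodFam x f) :
    GoodFam x fun a => rS (f a) :=
  ⟨fun a => rS_continuous (hf.1 a), fun gg a t => hf.2 gg a (σ t)⟩

lemma GoodFam.reindex {x y : BObj G B} {ω : y.X → I → B} (h : GoodFam y ω)
    (f : x.X → y.X) (hf : ∀ (g : G) (a : x.X), f (g • a) = g • f a) :
    GoodFam x fun a => ω (f a) :=
  ⟨fun a => h.1 (f a), fun g a t => by dsimp only; rw [hf, h.2]⟩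

end PHtpDefs

section PHtpLemmas

lemma PHtp.good₁ {x : BObj G B} {ω ω' : x.X → I → B} (h : PHtp x ω ω') : GoodFam x ω := by
  obtain ⟨K, hc, he, h0, h1, hs0, hs1⟩ := h
  constructor
  · intro a
    have : Continuous fun t : I => K a t 0 :=
      (hc a).comp (continuous_id.prodMk continuous_const)
    rwa [funext (h0 a)] at this
  · intro g a t
    rw [← h0 a t, ← h0 (g • a) t, he]

lemma PHtp.refl {x : BObj G B} {ω : x.X → I → B} (h : GoodFam x ω) : PHtp x ω ω :=
  ⟨fun a t _ => ω a t, fun a => (h.1 a).comp continuous_fst, fun g a t _ => h.2 g a t,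
    fun _ _ => rfl, fun _ _ => rfl, fun _ _ => rfl, fun _ _ => rfl⟩

lemma PHtp.symm {x : BObj G B} {ω ω' : x.X → I → B} (h : PHtp x ω ω') : PHtp x ω' ω := by
  obtain ⟨K, hc, he, h0, h1, hs0, hs1⟩ := h
  have e0 : ∀ a, ω' a 0 = ω a 0 := fun a => by rw [← h1 a 0, hs0 a 1, ← hs0 a 0, h0 a 0]
  have e1 : ∀ a, ω' a 1 = ω a 1 := fun a => by rw [← h1 a 1, hs1 a 1, ← hs1 a 0, h0 a 1]
  refine ⟨fun a t s => K a t (σ s), ?_, ?_, ?_, ?_, ?_, ?_⟩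
  · intro a
    exact (hc a).comp (continuous_fst.prodMk (unitInterval.continuous_symm.comp continuous_snd))
  · intro g a t s; exact he g a t (σ s)
  · intro a t; dsimp only; rw [unitInterval.symm_zero]; exact h1 a t
  · intro a t; dsimp only; rw [unitInterval.symm_one]; exact h0 a t
  · intro a s; dsimp only; rw [hs0, e0]
  · intro a s; dsimp only; rw [hs1, e1]

lemma PHtp.trans {x : BObj G B} {ω₁ ω₂ ω₃ : x.X → I → B}
    (h : PHtp x ω₁ ω₂) (h' : PHtp x ω₂ ω₃) : PHtp x ω₁ ω₃ := by
  obtain ⟨K, kc, ke, k0, k1, ks0, ks1⟩ := h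
  obtain ⟨L, lc, le, l0, l1, ls0, ls1⟩ := h'
  have e0 : ∀ a, ω₂ a 0 = ω₁ a 0 := fun a => by rw [← k1 a 0, ks0 a 1, ← ks0 a 0, k0 a 0]
  have e1 : ∀ a, ω₂ a 1 = ω₁ a 1 := fun a => by rw [← k1 a 1, ks1 a 1, ← ks1 a 0, k0 a 1]
  refine ⟨fun a t s =>
    if (s : ℝ) ≤ 1 / 2 then K a t (st (2 * (s : ℝ))) else L a t (st (2 * (s : ℝ) - 1)),
    ?_, ?_, ?_, ?_, ?_, ?_⟩
  · intro a
    apply Continuous.if_le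
    · exact (kc a).comp (continuous_fst.prodMk (continuous_st.comp (by fun_prop)))
    · exact (lc a).comp (continuous_fst.prodMk (continuous_st.comp (by fun_prop)))
    · exact continuous_subtype_val.comp continuous_snd
    · exact continuous_const
    · rintro ⟨t, s⟩ hs
      show K a t (st (2 * (s : ℝ))) = L a t (st (2 * (s : ℝ) - 1))
      have h2 : 2 * (s : ℝ) = 1 := by rw [hs]; ring
      rw [h2]
      norm_num [st_zero, st_one]
      rw [k1, l0]
  · intro g a t s
    dsimp only
    split_ifs
    · exact ke g a t _
    · exact le g a t _
  · intro a t
    dsimp only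
    rw [if_pos (by norm_num), show st (2 * ((0 : I) : ℝ)) = 0 by
      rw [show ((0:I):ℝ) = 0 from rfl, mul_zero]; exact st_zero]
    exact k0 a t
  · intro a t
    dsimp only
    rw [if_neg (by norm_num), show st (2 * ((1 : I) : ℝ) - 1) = 1 from
      st_ge_one (by rw [show ((1:I):ℝ) = 1 from rfl]; norm_num)]
    exact l1 a t
  · intro a s
    dsimp only
    split_ifs
    · exact ks0 a _
    · rw [ls0, e0]
  · intro a s
    dsimp only
    split_ifs
    · exact ks1 a _
    · rw [ls1, e1]

lemma PHtp.congr {x : BObj G B} {ω₁ ω₂ ω₁' ω₂' : x.X → I → B} (h : PHtp x ω₁ ω₂)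
    (e₁ : ∀ a t, ω₁ a t = ω₁' a t) (e₂ : ∀ a t, ω₂ a t = ω₂' a t) : PHtp x ω₁' ω₂' := by
  rwa [show ω₁' = ω₁ from funext fun a => funext fun t => (e₁ a t).symm,
    show ω₂' = ω₂ from funext fun a => funext fun t => (e₂ a t).symm]

lemma PHtp.reindex {x y : BObj G B} {ω ω' : y.X → I → B} (h : PHtp y ω ω')
    (f : x.X → y.X) (hf : ∀ (g : G) (a : x.X), f (g • a) = g • f a) :
    PHtp x (fun a => ω (f a)) fun a => ω' (f a) := by
  obtain ⟨K, hc, he, h0, h1, hs0, hs1⟩ := h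
  exact ⟨fun a => K (f a), fun a => hc (f a), fun g a t s => by dsimp only; rw [hf, he],
    fun a t => h0 (f a) t, fun a t => h1 (f a) t, fun a s => hs0 (f a) s, fun a s => hs1 (f a) s⟩

end PHtpLemmas

section PHtpConcrete

lemma coeI0 : (((0 : I)) : ℝ) = 0 := rfl
lemma coeI1 : (((1 : I)) : ℝ) = 1 := rfl

lemma rT_of_le {β : Type*} {f g : I → β} {t : I} (h : (t : ℝ) ≤ 1 / 2) :
    rT f g t = f (st (2 * (t : ℝ))) := if_pos h

lemma rT_of_gt {β : Type*} {f g : I → β} {t : I} (h : ¬(t : ℝ) ≤ 1 / 2) :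
    rT f g t = g (st (2 * (t : ℝ) - 1)) := if_neg h

lemma PHtp.reparam {x : BObj G B} {ω₁ ω₂ : x.X → I → B} {C : x.X → I → B} (hC : GoodFam x C)
    (φ : I → I → ℝ) (hφ : Continuous fun q : I × I => φ q.1 q.2)
    (h0 : ∀ a t, C a (st (φ t 0)) = ω₁ a t)
    (h1 : ∀ a t, C a (st (φ t 1)) = ω₂ a t)
    (hl : ∀ a s, C a (st (φ 0 s)) = ω₁ a 0)
    (hr : ∀ a s, C a (st (φ 1 s)) = ω₁ a 1) : PHtp x ω₁ ω₂ :=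
  ⟨fun a t s => C a (st (φ t s)),
   fun a => (hC.1 a).comp (continuous_st.comp hφ),
   fun g a t s => hC.2 g a _, h0, h1, hl, hr⟩

/-- `refl.trans p` is homotopic to `p`. -/
lemma phtp_reflTrans {x : BObj G B} {p : x.X → I → B} (hp : GoodFam x p) :
    PHtp x (fun a => rT (fun _ => p a 0) (p a)) p := by
  apply PHtp.reparam hp (fun t s => (1 - (s : ℝ)) * (2 * (t : ℝ) - 1) + (s : ℝ) * (t : ℝ))
  · fun_prop
  · intro a t
    rw [show (1 - ((0:I) : ℝ)) * (2 * (t:ℝ) - 1) + ((0:I):ℝ) * (t:ℝ) = 2 * (t:ℝ) - 1 by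
      rw [coeI0]; ring]
    rcases le_or_gt (t : ℝ) (1/2) with h | h
    · rw [rT_of_le h, st_le_zero (show 2 * (t:ℝ) - 1 ≤ 0 by linarith)]
    · rw [rT_of_gt (not_le.mpr h)]
  · intro a t
    rw [show (1 - ((1:I) : ℝ)) * (2 * (t:ℝ) - 1) + ((1:I):ℝ) * (t:ℝ) = (t:ℝ) by
      rw [coeI1]; ring, st_I]
  · intro a s
    rw [show (1 - (s : ℝ)) * (2 * ((0:I):ℝ) - 1) + (s:ℝ) * ((0:I):ℝ) = (s:ℝ) - 1 by
      rw [coeI0]; ring, rT_zero, st_le_zero (by linarith [s.2.2])]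
  · intro a s
    rw [show (1 - (s : ℝ)) * (2 * ((1:I):ℝ) - 1) + (s:ℝ) * ((1:I):ℝ) = 1 by
      rw [coeI1]; ring, st_one, rT_one]

/-- `p.symm.trans p` is homotopic to the constant path at `p 1`. -/
lemma phtp_symmTrans {x : BObj G B} {p : x.X → I → B} (hp : GoodFam x p) :
    PHtp x (fun a => rT (rS (p a)) (p a)) (fun a _ => p a 1) := by
  apply PHtp.reparam hp (fun t s => (1 - (s : ℝ)) * |2 * (t : ℝ) - 1| + (s : ℝ))
  · fun_prop
  · intro a t
    rw [show (1 - ((0:I) : ℝ)) * |2 * (t:ℝ) - 1| + ((0:I):ℝ) = |2 * (t:ℝ) - 1| by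
      rw [coeI0]; ring]
    rcases le_or_gt (t : ℝ) (1/2) with h | h
    · rw [rT_of_le h, abs_of_nonpos (by linarith)]
      show p a _ = rS (p a) _
      unfold rS
      refine congrArg (p a) (Subtype.ext ?_)
      rw [st_mem (by linarith) (by linarith [t.2.1]), unitInterval.coe_symm_eq,
        st_mem (by linarith [t.2.1]) (by linarith)]
      ring
    · rw [rT_of_gt (not_le.mpr h), abs_of_nonneg (by linarith)]
  · intro a t
    rw [show (1 - ((1:I) : ℝ)) * |2 * (t:ℝ) - 1| + ((1:I):ℝ) = 1 by rw [coeI1]; ring, st_one]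
  · intro a s
    rw [show (1 - (s : ℝ)) * |2 * ((0:I):ℝ) - 1| + (s:ℝ) = 1 by
      rw [coeI0]; rw [show |2 * (0:ℝ) - 1| = 1 by norm_num]; ring, st_one, rT_zero, rS_zero]
  · intro a s
    rw [show (1 - (s : ℝ)) * |2 * ((1:I):ℝ) - 1| + (s:ℝ) = 1 by
      rw [coeI1]; rw [show |2 * (1:ℝ) - 1| = 1 by norm_num]; ring, st_one, rT_one]

/-- `(T.trans q).trans q.symm` is homotopic to `T`. -/
lemma phtp_cancel {x : BObj G B} {T q : x.X → I → B} (hT : GoodFam x T) (hq : GoodFam x q)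
    (hq0 : ∀ a, q a 0 = T a 1) :
    PHtp x (fun a => rT (rT (T a) (q a)) (rS (q a))) T := by
  have hC : GoodFam x fun a => rT (T a) (q a) := hT.rT' hq fun a => (hq0 a).symm
  apply PHtp.reparam hC
    (fun t s => (1 - (s : ℝ)) * min (2 * (t : ℝ)) (3/2 - (t : ℝ)) + (s : ℝ) * ((t : ℝ) / 2))
  · fun_prop
  · intro a t
    rw [show (1 - ((0:I) : ℝ)) * min (2 * (t:ℝ)) (3/2 - (t:ℝ)) + ((0:I):ℝ) * ((t:ℝ)/2)
        = min (2 * (t:ℝ)) (3/2 - (t:ℝ)) by rw [coeI0]; ring]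
    rcases le_or_gt (t : ℝ) (1/2) with h | h
    · rw [min_eq_left (by linarith), rT_of_le h]
    · rw [min_eq_right (by linarith), rT_of_gt (not_le.mpr h)]
      have hst : (st (3/2 - (t:ℝ)) : ℝ) = 3/2 - (t:ℝ) :=
        st_mem (by linarith [t.2.2]) (by linarith)
      rcases le_or_gt ((st (3/2 - (t:ℝ)) : ℝ)) (1/2) with hc | hc
      · have ht1 : (t : ℝ) = 1 := le_antisymm t.2.2 (by rw [hst] at hc; linarith)
        rw [rT_of_le hc, hst, show 2 * (3/2 - (t:ℝ)) = 1 by rw [ht1]; ring, st_one,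
          show 2 * (t:ℝ) - 1 = 1 by rw [ht1]; ring, st_one]
        unfold rS
        rw [unitInterval.symm_one, hq0]
      · rw [rT_of_gt (not_le.mpr hc), hst]
        show q a _ = rS (q a) _
        unfold rS
        refine congrArg (q a) (Subtype.ext ?_)
        rw [st_mem (by linarith [t.2.2]) (by linarith), unitInterval.coe_symm_eq,
          st_mem (by linarith) (by linarith [t.2.2])]
        ring
  · intro a t
    rw [show (1 - ((1:I) : ℝ)) * min (2 * (t:ℝ)) (3/2 - (t:ℝ)) + ((1:I):ℝ) * ((t:ℝ)/2)
        = (t:ℝ)/2 by rw [coeI1]; ring]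
    have hst : (st ((t:ℝ)/2) : ℝ) = (t:ℝ)/2 := st_mem (by linarith [t.2.1]) (by linarith [t.2.2])
    rw [rT_of_le (by rw [hst]; linarith [t.2.2]), hst, show 2 * ((t:ℝ)/2) = (t:ℝ) by ring, st_I]
  · intro a s
    rw [show (1 - (s : ℝ)) * min (2 * ((0:I):ℝ)) (3/2 - ((0:I):ℝ)) + (s:ℝ) * (((0:I):ℝ)/2)
        = 0 by rw [coeI0]; rw [show min (2*(0:ℝ)) (3/2 - 0) = 0 by norm_num]; ring,
      st_zero, rT_zero, rT_zero, rT_zero]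
  · intro a s
    rw [show (1 - (s : ℝ)) * min (2 * ((1:I):ℝ)) (3/2 - ((1:I):ℝ)) + (s:ℝ) * (((1:I):ℝ)/2)
        = 1/2 by rw [coeI1]; rw [show min (2*(1:ℝ)) (3/2 - 1) = 1/2 by norm_num]; ring,
      rT_one, rS_one]
    have hst : (st ((1:ℝ)/2) : ℝ) = 1/2 := st_mem (by norm_num) (by norm_num)
    rw [rT_of_le (by rw [hst]), hst, show 2 * ((1:ℝ)/2) = 1 by ring, st_one, hq0]

/-- `(T.trans q.symm).trans q` is homotopic to `T`, when `q` ends where `T` ends. -/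
lemma phtp_cancel' {x : BObj G B} {T q : x.X → I → B} (hT : GoodFam x T) (hq : GoodFam x q)
    (hq1 : ∀ a, q a 1 = T a 1) :
    PHtp x (fun a => rT (rT (T a) (rS (q a))) (q a)) T := by
  have := phtp_cancel hT hq.rS' (fun a => by rw [rS_zero, hq1])
  exact this.congr (fun a t => by
    unfold rS
    simp only [unitInterval.symm_symm]) fun a t => rfl

end PHtpConcrete

section HComp

/-- Left congruence for concatenation. -/
lemma PHtp.hcompL {x : BObj G B} {ω₁ ω₂ r : x.X → I → B} (h : PHtp x ω₁ ω₂)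
    (hr : GoodFam x r) (he : ∀ a, r a 0 = ω₁ a 1) :
    PHtp x (fun a => rT (ω₁ a) (r a)) fun a => rT (ω₂ a) (r a) := by
  obtain ⟨K, kc, ke, k0, k1, ks0, ks1⟩ := h
  refine ⟨fun a t s =>
    if (t : ℝ) ≤ 1 / 2 then K a (st (2 * (t : ℝ))) s else r a (st (2 * (t : ℝ) - 1)),
    ?_, ?_, ?_, ?_, ?_, ?_⟩
  · intro a
    apply Continuous.if_le
    · exact (kc a).comp ((continuous_st.comp (by fun_prop)).prodMk continuous_snd)
    · exact (hr.1 a).comp (continuous_st.comp (by fun_prop))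
    · exact continuous_subtype_val.comp continuous_fst
    · exact continuous_const
    · rintro ⟨t, s⟩ ht
      show K a (st (2 * (t : ℝ))) s = r a (st (2 * (t : ℝ) - 1))
      have h2 : 2 * (t : ℝ) = 1 := by rw [ht]; ring
      rw [h2]
      norm_num [st_zero, st_one]
      rw [ks1, he]
  · intro g a t s
    dsimp only
    split_ifs
    · exact ke g a _ s
    · exact hr.2 g a _
  · intro a t
    dsimp only
    unfold rT
    split_ifs
    · exact k0 a _
    · rfl
  · intro a t
    dsimp only
    unfold rT
    split_ifs
    · exact k1 a _
    · rfl
  · intro a s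
    dsimp only
    rw [if_pos (by rw [coeI0]; norm_num), rT_zero, show st (2 * ((0:I):ℝ)) = 0 by
      rw [coeI0, mul_zero]; exact st_zero]
    exact ks0 a s
  · intro a s
    dsimp only
    rw [if_neg (by rw [coeI1]; norm_num), rT_one]
    exact congrArg (r a) (by rw [coeI1]; exact st_ge_one (by norm_num))

/-- Right congruence for concatenation. -/
lemma PHtp.hcompR {x : BObj G B} {p ω₁ ω₂ : x.X → I → B} (h : PHtp x ω₁ ω₂)
    (hp : GoodFam x p) (he : ∀ a, ω₁ a 0 = p a 1) :
    PHtp x (fun a => rT (p a) (ω₁ a)) fun a => rT (p a) (ω₂ a) := by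
  obtain ⟨K, kc, ke, k0, k1, ks0, ks1⟩ := h
  refine ⟨fun a t s =>
    if (t : ℝ) ≤ 1 / 2 then p a (st (2 * (t : ℝ))) else K a (st (2 * (t : ℝ) - 1)) s,
    ?_, ?_, ?_, ?_, ?_, ?_⟩
  · intro a
    apply Continuous.if_le
    · exact (hp.1 a).comp (continuous_st.comp (by fun_prop))
    · exact (kc a).comp ((continuous_st.comp (by fun_prop)).prodMk continuous_snd)
    · exact continuous_subtype_val.comp continuous_fst
    · exact continuous_const
    · rintro ⟨t, s⟩ ht
      show p a (st (2 * (t : ℝ))) = K a (st (2 * (t : ℝ) - 1)) s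
      have h2 : 2 * (t : ℝ) = 1 := by rw [ht]; ring
      rw [h2]
      norm_num [st_zero, st_one]
      rw [ks0, he]
  · intro g a t s
    dsimp only
    split_ifs
    · exact hp.2 g a _
    · exact ke g a _ s
  · intro a t
    dsimp only
    unfold rT
    split_ifs
    · rfl
    · exact k0 a _
  · intro a t
    dsimp only
    unfold rT
    split_ifs
    · rfl
    · exact k1 a _
  · intro a s
    dsimp only
    rw [if_pos (by rw [coeI0]; norm_num), rT_zero]
    exact congrArg (p a) (by rw [coeI0, mul_zero]; exact st_zero)
  · intro a s
    dsimp only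
    rw [if_neg (by rw [coeI1]; norm_num), rT_one,
      show st (2 * ((1:I):ℝ) - 1) = 1 from by rw [coeI1]; exact st_ge_one (by norm_num)]
    exact ks1 a s

/-- Glue two homotopies over a disjoint union. -/
lemma PHtp.sum {x y : BObj G B} {ω ω' : (cop x y).X → I → B}
    (h1 : PHtp x (fun a => ω (Sum.inl a)) fun a => ω' (Sum.inl a))
    (h2 : PHtp y (fun a => ω (Sum.inr a)) fun a => ω' (Sum.inr a)) :
    PHtp (cop x y) ω ω' := by
  obtain ⟨K, kc, ke, k0, k1, ks0, ks1⟩ := h1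
  obtain ⟨L, lc, le, l0, l1, ls0, ls1⟩ := h2
  refine ⟨fun a => Sum.rec (fun a => K a) (fun a => L a) a, ?_, ?_, ?_, ?_, ?_, ?_⟩
  · rintro (a | a)
    exacts [kc a, lc a]
  · rintro g (a | a) t s
    exacts [ke g a t s, le g a t s]
  · rintro (a | a) t
    exacts [k0 a t, l0 a t]
  · rintro (a | a) t
    exacts [k1 a t, l1 a t]
  · rintro (a | a) s
    exacts [ks0 a s, ls0 a s]
  · rintro (a | a) s
    exacts [ks1 a s, ls1 a s]

end HComp

section Bridge

/-- Build `HRel` from an equivariant family homotopy. -/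
lemma hrel_of {x y : BObj G B} {f f' : HomRep x y} (hα : f.α = f'.α)
    (h : PHtp x (fun a => ⇑(f.ω a)) fun a => ⇑(f'.ω a)) : HRel f f' := by
  obtain ⟨K, hc, he, h0, h1, hs0, hs1⟩ := h
  exact ⟨hα, K, hc, he, h0, h1,
    fun a s => (hs0 a s).trans (f.ω a).source,
    fun a s => (hs1 a s).trans (f.ω a).target⟩

lemma hrel_phtp {x y : BObj G B} {f f' : HomRep x y} (h : HRel f f') :
    PHtp x (fun a => ⇑(f.ω a)) fun a => ⇑(f'.ω a) := by
  obtain ⟨hα, K, hc, he, h0, h1, hs0, hs1⟩ := h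
  exact ⟨K, hc, he, h0, h1,
    fun a s => (hs0 a s).trans (f.ω a).source.symm,
    fun a s => (hs1 a s).trans (f.ω a).target.symm⟩

lemma hrel_equiv {x y : BObj G B} : Equivalence (HRel (x := x) (y := y)) where
  refl f := hrel_of rfl (PHtp.refl (goodFam_ω f))
  symm h := hrel_of h.1.symm (hrel_phtp h).symm
  trans h h' := hrel_of (h.1.trans h'.1) ((hrel_phtp h).trans (hrel_phtp h'))

lemma hrel_of_eq {x y : BObj G B} {f g : HomRep x y}
    (h : Quot.mk _ f = (Quot.mk _ g : HomQ x y)) : HRel f g :=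
  hrel_equiv.eqvGen_iff.mp (Quot.eqvGen_exact h)

end Bridge

section CompQ

lemma comp_congr_left {x y z : BObj G B} (g : HomRep y z) {f₁ f₂ : HomRep x y}
    (h : HRel f₁ f₂) : HRel (compRep f₁ g) (compRep f₂ g) := by
  apply hrel_of (show g.α ∘ f₁.α = g.α ∘ f₂.α by rw [h.1])
  have hgood : GoodFam x fun a => ⇑(g.ω (f₁.α a)) :=
    (goodFam_ω g).reindex f₁.α f₁.hα
  have key := (hrel_phtp h).hcompL hgood fun a => by
    rw [(g.ω (f₁.α a)).source, (f₁.ω a).target]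
  refine key.congr (fun a t => (ptrans_coe _ _ t).symm) fun a t => ?_
  have e : f₁.α a = f₂.α a := congrFun h.1 a
  rw [e]
  exact (ptrans_coe _ _ t).symm

lemma comp_congr_right {x y z : BObj G B} (f : HomRep x y) {g₁ g₂ : HomRep y z}
    (h : HRel g₁ g₂) : HRel (compRep f g₁) (compRep f g₂) := by
  apply hrel_of (show g₁.α ∘ f.α = g₂.α ∘ f.α by rw [h.1])
  have key := ((hrel_phtp h).reindex f.α f.hα).hcompR (goodFam_ω f) fun a => by
    rw [(g₁.ω (f.α a)).source, (f.ω a).target]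
  exact key.congr (fun a t => (ptrans_coe _ _ t).symm) fun a t => (ptrans_coe _ _ t).symm

/-- Composition on homotopy classes. -/
noncomputable def compQ {x y z : BObj G B} : HomQ x y → HomQ y z → HomQ x z :=
  Quot.lift₂ (fun f g => Quot.mk _ (compRep f g))
    (fun f g₁ g₂ h => Quot.sound (comp_congr_right f h))
    (fun f₁ f₂ g h => Quot.sound (comp_congr_left g h))

lemma compQ_mk {x y z : BObj G B} (f : HomRep x y) (g : HomRep y z) :
    compQ (Quot.mk _ f) (Quot.mk _ g) = Quot.mk _ (compRep f g) := rfl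

end CompQ

section Lifts

/-- The lift into the pullback. -/
noncomputable def pbLift {w x y z : BObj G B} (fx : HomRep x z) (fy : HomRep y z)
    (ur : HomRep w x) (vr : HomRep w y) (hc : fx.α ∘ ur.α = fy.α ∘ vr.α) :
    HomRep w (pb fx fy) where
  α a := ⟨(ur.α a, vr.α a), congrFun hc a⟩
  hα g a := Subtype.ext (by
    show (ur.α (g • a), vr.α (g • a)) = (g • ur.α a, g • vr.α a)
    rw [ur.hα, vr.hα])
  ω a := (ur.ω a).trans (fx.ω (ur.α a))
  hω g a t := by
    refine (ptrans_coe _ _ t).trans (Eq.trans ?_ (congrArg (g • ·) (ptrans_coe _ _ t).symm))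
    unfold rT
    split_ifs
    · exact ur.hω g a _
    · exact (congrArg (fun c => (fx.ω c) (st (2 * (t : ℝ) - 1))) (ur.hα g a)).trans
        (fx.hω g (ur.α a) _)

/-- The comparison `(x₁ ⊔ x₂) ×_z y → (x₁ ×_z y) ⊔ (x₂ ×_z y)`. -/
def distF (x₁ x₂ y z : BObj G B) (f₁ : HomRep x₁ z) (f₂ : HomRep x₂ z) (g : HomRep y z) :
    HomRep (pb (copairRep x₁ x₂ f₁ f₂) g) (cop (pb f₁ g) (pb f₂ g)) where
  α pr := match pr with
    | ⟨(Sum.inl a, b), h⟩ => Sum.inl ⟨(a, b), h⟩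
    | ⟨(Sum.inr a, b), h⟩ => Sum.inr ⟨(a, b), h⟩
  hα gg pr := by
    obtain ⟨⟨a | a, b⟩, h⟩ := pr <;> rfl
  ω pr := match pr with
    | ⟨(Sum.inl a, b), h⟩ => Path.refl (z.map (f₁.α a))
    | ⟨(Sum.inr a, b), h⟩ => Path.refl (z.map (f₂.α a))
  hω gg pr t := by
    obtain ⟨⟨a | a, b⟩, h⟩ := pr
    · show z.map (f₁.α (gg • a)) = gg • z.map (f₁.α a)
      rw [f₁.hα, z.eqv]
    · show z.map (f₂.α (gg • a)) = gg • z.map (f₂.α a)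
      rw [f₂.hα, z.eqv]

/-- The inverse comparison. -/
def distB (x₁ x₂ y z : BObj G B) (f₁ : HomRep x₁ z) (f₂ : HomRep x₂ z) (g : HomRep y z) :
    HomRep (cop (pb f₁ g) (pb f₂ g)) (pb (copairRep x₁ x₂ f₁ f₂) g) where
  α pr := match pr with
    | Sum.inl ⟨(a, b), h⟩ => ⟨(Sum.inl a, b), h⟩
    | Sum.inr ⟨(a, b), h⟩ => ⟨(Sum.inr a, b), h⟩
  hα gg pr := by
    obtain (⟨⟨a, b⟩, h⟩ | ⟨⟨a, b⟩, h⟩) := pr <;> rfl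
  ω pr := match pr with
    | Sum.inl ⟨(a, b), h⟩ => Path.refl (z.map (f₁.α a))
    | Sum.inr ⟨(a, b), h⟩ => Path.refl (z.map (f₂.α a))
  hω gg pr t := by
    obtain (⟨⟨a, b⟩, h⟩ | ⟨⟨a, b⟩, h⟩) := pr
    · show z.map (f₁.α (gg • a)) = gg • z.map (f₁.α a)
      rw [f₁.hα, z.eqv]
    · show z.map (f₂.α (gg • a)) = gg • z.map (f₂.α a)
      rw [f₂.hα, z.eqv]

end Lifts

theorem stmt11 :
    ∃ comp : ∀ {x y z : BObj G B}, HomQ x y → HomQ y z → HomQ x z,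
      -- `comp` is the composition of `BFin^G_B`, induced by `compRep`:
      (∀ (x y z : BObj G B) (f : HomRep x y) (g : HomRep y z),
        comp (Quot.mk _ f) (Quot.mk _ g) = Quot.mk _ (compRep f g)) ∧
      -- the disjoint union is a coproduct:
      (∀ (x y w : BObj G B) (f : HomQ x w) (g : HomQ y w),
        ∃! h : HomQ (cop x y) w,
          comp (Quot.mk _ (inlRep x y)) h = f ∧ comp (Quot.mk _ (inrRep x y)) h = g) ∧
      -- `x ×_z y`, with the two projections, is a pullback of `f_x` and `f_y`:
      (∀ (x y z : BObj G B) (fx : HomRep x z) (fy : HomRep y z),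
        comp (Quot.mk _ (pbFst fx fy)) (Quot.mk _ fx)
            = comp (Quot.mk _ (pbSnd fx fy)) (Quot.mk _ fy) ∧
        ∀ (w : BObj G B) (u : HomQ w x) (v : HomQ w y),
          comp u (Quot.mk _ fx) = comp v (Quot.mk _ fy) →
          ∃! h : HomQ w (pb fx fy),
            comp h (Quot.mk _ (pbFst fx fy)) = u ∧
            comp h (Quot.mk _ (pbSnd fx fy)) = v) ∧
      -- pullbacks distribute over coproducts: the canonical comparison between
      -- `(x₁ ⊔ x₂) ×_z y` and `(x₁ ×_z y) ⊔ (x₂ ×_z y)` is an isomorphism: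
      (∀ (x₁ x₂ y z : BObj G B) (f₁ : HomRep x₁ z) (f₂ : HomRep x₂ z)
          (g : HomRep y z),
        ∃ (h : HomQ (pb (copairRep x₁ x₂ f₁ f₂) g) (cop (pb f₁ g) (pb f₂ g)))
          (h' : HomQ (cop (pb f₁ g) (pb f₂ g)) (pb (copairRep x₁ x₂ f₁ f₂) g)),
          comp h h' = Quot.mk _ (idRep _) ∧ comp h' h = Quot.mk _ (idRep _)) := by
  refine ⟨fun {x y z} => compQ, fun _ _ _ _ _ => rfl, ?_, ?_, ?_⟩
  · -- coproducts
    intro x y w f g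
    induction f using Quot.ind with | _ f => ?_
    induction g using Quot.ind with | _ g => ?_
    refine ⟨Quot.mk _ (copairRep x y f g), ⟨?_, ?_⟩, ?_⟩
    · show Quot.mk _ (compRep (inlRep x y) (copairRep x y f g)) = Quot.mk _ f
      refine Quot.sound (hrel_of (funext fun a => rfl) ?_)
      refine (phtp_reflTrans (goodFam_ω f)).congr (fun a t => ?_) fun a t => rfl
      show rT (fun _ => (f.ω a) 0) (⇑(f.ω a)) t = ((Path.refl (x.map a)).trans (f.ω a)) t
      rw [ptrans_coe]
      unfold rT
      split_ifs
      · exact (f.ω a).source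
      · rfl
    · show Quot.mk _ (compRep (inrRep x y) (copairRep x y f g)) = Quot.mk _ g
      refine Quot.sound (hrel_of (funext fun a => rfl) ?_)
      refine (phtp_reflTrans (goodFam_ω g)).congr (fun a t => ?_) fun a t => rfl
      show rT (fun _ => (g.ω a) 0) (⇑(g.ω a)) t = ((Path.refl (y.map a)).trans (g.ω a)) t
      rw [ptrans_coe]
      unfold rT
      split_ifs
      · exact (g.ω a).source
      · rfl
    · rintro h' ⟨e1, e2⟩
      induction h' using Quot.ind with | _ k => ?_
      have e1' : Quot.mk _ (compRep (inlRep x y) k) = Quot.mk _ f := e1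
      have e2' : Quot.mk _ (compRep (inrRep x y) k) = Quot.mk _ g := e2
      have r1 := hrel_of_eq e1'
      have r2 := hrel_of_eq e2'
      refine Quot.sound (hrel_of ?_ ?_)
      · funext a
        rcases a with a | a
        · exact congrFun r1.1 a
        · exact congrFun r2.1 a
      · apply PHtp.sum
        · -- inl component
          have goodA : GoodFam x fun a => ⇑(k.ω (Sum.inl a)) :=
            (goodFam_ω k).reindex Sum.inl fun _ _ => rfl
          have htp1 : PHtp x (fun a => rT (fun _ => (k.ω (Sum.inl a)) 0) ⇑(k.ω (Sum.inl a)))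
              (fun a => ⇑(f.ω a)) := by
            refine (hrel_phtp r1).congr (fun a t => ?_) fun a t => rfl
            show ((Path.refl (x.map a)).trans (k.ω (Sum.inl a))) t = _
            refine (ptrans_coe _ _ t).trans ?_
            unfold rT
            split_ifs
            · exact (k.ω (Sum.inl a)).source.symm.trans rfl
            · rfl
          exact ((phtp_reflTrans goodA).symm.trans htp1 :)
        · have goodA : GoodFam y fun a => ⇑(k.ω (Sum.inr a)) :=
            (goodFam_ω k).reindex Sum.inr fun _ _ => rfl
          have htp1 : PHtp y (fun a => rT (fun _ => (k.ω (Sum.inr a)) 0) ⇑(k.ω (Sum.inr a)))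
              (fun a => ⇑(g.ω a)) := by
            refine (hrel_phtp r2).congr (fun a t => ?_) fun a t => rfl
            show ((Path.refl (y.map a)).trans (k.ω (Sum.inr a))) t = _
            refine (ptrans_coe _ _ t).trans ?_
            unfold rT
            split_ifs
            · exact (k.ω (Sum.inr a)).source.symm.trans rfl
            · rfl
          exact ((phtp_reflTrans goodA).symm.trans htp1 :)
  · -- pullbacks
    intro x y z fx fy
    have hP : GoodFam (pb fx fy) fun pr => ⇑(fx.ω pr.1.1) :=
      (goodFam_ω fx).reindex (fun pr : (pb fx fy).X => pr.1.1) fun _ _ => rfl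
    have hQ : GoodFam (pb fx fy) fun pr => ⇑(fy.ω pr.1.2) :=
      (goodFam_ω fy).reindex (fun pr : (pb fx fy).X => pr.1.2) fun _ _ => rfl
    constructor
    · show Quot.mk _ (compRep (pbFst fx fy) fx) = Quot.mk _ (compRep (pbSnd fx fy) fy)
      apply Quot.sound
      refine hrel_of (funext fun pr => ?_) ?_
      · exact pr.2
      have h1 : PHtp (pb fx fy) (fun pr => ⇑((compRep (pbFst fx fy) fx).ω pr))
          (fun pr _ => (fx.ω pr.1.1) 1) := by
        refine (phtp_symmTrans hP).congr (fun pr t => ?_) fun pr t => rfl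
        show _ = ((fx.ω pr.1.1).symm.trans (fx.ω pr.1.1)) t
        rw [ptrans_coe]
        unfold rT
        split_ifs <;> rfl
      have h2 : PHtp (pb fx fy) (fun pr => ⇑((compRep (pbSnd fx fy) fy).ω pr))
          (fun pr _ => (fx.ω pr.1.1) 1) := by
        refine (phtp_symmTrans hQ).congr (fun pr t => ?_) fun pr t => ?_
        · show _ = ((Path.cast (fy.ω pr.1.2).symm
            (by show z.map (fx.α pr.1.1) = z.map (fy.α pr.1.2); rw [pr.2]) rfl).trans
            (fy.ω pr.1.2)) t
          rw [ptrans_coe]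
          unfold rT
          split_ifs <;> rfl
        · show (fy.ω pr.1.2) 1 = (fx.ω pr.1.1) 1
          rw [(fy.ω pr.1.2).target, (fx.ω pr.1.1).target, pr.2]
      exact h1.trans h2.symm
    · intro w u v huv
      induction u using Quot.ind with | _ ur => ?_
      induction v using Quot.ind with | _ vr => ?_
      have huv' : Quot.mk _ (compRep ur fx) = Quot.mk _ (compRep vr fy) := huv
      have r := hrel_of_eq huv'
      have hc : fx.α ∘ ur.α = fy.α ∘ vr.α := r.1
      have hT : GoodFam w fun a => ⇑(ur.ω a) := goodFam_ω ur
      have hV : GoodFam w fun a => ⇑(vr.ω a) := goodFam_ω vr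
      have hq : GoodFam w fun a => ⇑(fx.ω (ur.α a)) := (goodFam_ω fx).reindex ur.α ur.hα
      have hq' : GoodFam w fun a => ⇑(fy.ω (vr.α a)) := (goodFam_ω fy).reindex vr.α vr.hα
      refine ⟨Quot.mk _ (pbLift fx fy ur vr hc), ⟨?_, ?_⟩, ?_⟩
      · show Quot.mk _ (compRep (pbLift fx fy ur vr hc) (pbFst fx fy)) = Quot.mk _ ur
        refine Quot.sound (hrel_of (funext fun a => rfl) ?_)
        have hcan := phtp_cancel hT hq fun a => by
          rw [(fx.ω (ur.α a)).source, (ur.ω a).target]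
        refine hcan.congr (fun a t => ?_) fun a t => rfl
        show _ = (((ur.ω a).trans (fx.ω (ur.α a))).trans ((fx.ω (ur.α a)).symm)) t
        rw [ptrans_coe]
        rcases le_or_gt (t : ℝ) (1/2) with h | h
        · rw [rT_of_le h, rT_of_le h]
          exact (ptrans_coe _ _ _).symm
        · rw [rT_of_gt (not_le.mpr h), rT_of_gt (not_le.mpr h)]
          rfl
      · show Quot.mk _ (compRep (pbLift fx fy ur vr hc) (pbSnd fx fy)) = Quot.mk _ vr
        refine Quot.sound (hrel_of (funext fun a => rfl) ?_)
        have P1 : PHtp w (fun a => rT (⇑(ur.ω a)) ⇑(fx.ω (ur.α a)))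
            (fun a => rT (⇑(vr.ω a)) ⇑(fy.ω (vr.α a))) :=
          (hrel_phtp r).congr (fun a t => ptrans_coe _ _ t) fun a t => ptrans_coe _ _ t
        have P2 := P1.hcompL hq'.rS' fun a => by
          rw [rS_zero, rT_one, (fy.ω (vr.α a)).target, (fx.ω (ur.α a)).target]
          exact congrArg z.map (congrFun hc a).symm
        have P3 := phtp_cancel hV hq' fun a => by
          rw [(fy.ω (vr.α a)).source, (vr.ω a).target]
        refine ((P2.trans P3).congr (fun a t => ?_) fun a t => rfl).symm.symm
        show _ = (((ur.ω a).trans (fx.ω (ur.α a))).trans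
          (Path.cast (fy.ω (vr.α a)).symm
            (by show z.map (fx.α (ur.α a)) = z.map (fy.α (vr.α a))
                exact congrArg z.map (congrFun hc a)) rfl)) t
        rw [ptrans_coe]
        rcases le_or_gt (t : ℝ) (1/2) with h | h
        · rw [rT_of_le h, rT_of_le h]
          exact (ptrans_coe _ _ _).symm
        · rw [rT_of_gt (not_le.mpr h), rT_of_gt (not_le.mpr h)]
          rfl
      · rintro h2 ⟨e1, e2⟩
        induction h2 using Quot.ind with | _ k => ?_
        have e1' : Quot.mk _ (compRep k (pbFst fx fy)) = Quot.mk _ ur := e1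
        have e2' : Quot.mk _ (compRep k (pbSnd fx fy)) = Quot.mk _ vr := e2
        have r1 := hrel_of_eq e1'
        have r2 := hrel_of_eq e2'
        refine Quot.sound (hrel_of ?_ ?_)
        · funext a
          refine Subtype.ext (Prod.ext ?_ ?_)
          · exact congrFun r1.1 a
          · exact congrFun r2.1 a
        · have hA : GoodFam w fun a => ⇑(k.ω a) := goodFam_ω k
          have hp : GoodFam w fun a => ⇑(fx.ω ((k.α a).1.1)) :=
            (goodFam_ω fx).reindex (fun a => (k.α a).1.1) fun gg a => by rw [k.hα]; rfl
          have S1 : PHtp w (fun a => rT (⇑(k.ω a)) (rS ⇑(fx.ω ((k.α a).1.1))))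
              (fun a => ⇑(ur.ω a)) := by
            refine (hrel_phtp r1).congr (fun a t => ?_) fun a t => rfl
            show ((k.ω a).trans ((fx.ω ((k.α a).1.1)).symm)) t = _
            refine (ptrans_coe _ _ t).trans ?_
            unfold rT
            split_ifs <;> rfl
          have S2 := S1.hcompL hp fun a => by rw [rT_one, rS_one]
          have S3 := phtp_cancel' hA hp fun a => by
            rw [(fx.ω ((k.α a).1.1)).target, (k.ω a).target]; rfl
          refine S3.symm.trans (S2.congr (fun a t => rfl) fun a t => ?_)
          have e : (k.α a).1.1 = ur.α a := congrFun r1.1 a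
          rw [e]
          exact (ptrans_coe _ _ _).symm
  · -- distributivity
    intro x₁ x₂ y z f₁ f₂ g
    refine ⟨Quot.mk _ (distF x₁ x₂ y z f₁ f₂ g), Quot.mk _ (distB x₁ x₂ y z f₁ f₂ g), ?_, ?_⟩
    · show Quot.mk _ (compRep (distF x₁ x₂ y z f₁ f₂ g) (distB x₁ x₂ y z f₁ f₂ g))
        = Quot.mk _ (idRep _)
      refine Quot.sound (hrel_of ?_ ?_)
      · funext pr
        obtain ⟨⟨a | a, b⟩, h⟩ := pr <;> rfl
      · have hgood : GoodFam (pb (copairRep x₁ x₂ f₁ f₂) g)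
            fun pr (_ : I) => (pb (copairRep x₁ x₂ f₁ f₂) g).map pr :=
          ⟨fun _ => continuous_const, fun gg pr _ => (pb (copairRep x₁ x₂ f₁ f₂) g).eqv gg pr⟩
        refine (phtp_reflTrans hgood).congr (fun pr t => ?_) fun pr t => rfl
        obtain ⟨⟨a | a, b⟩, h⟩ := pr
        · show rT _ _ t = ((Path.refl (z.map (f₁.α a))).trans (Path.refl (z.map (f₁.α a)))) t
          rw [ptrans_coe]
          unfold rT
          split_ifs <;> rfl
        · show rT _ _ t = ((Path.refl (z.map (f₂.α a))).trans (Path.refl (z.map (f₂.α a)))) t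
          rw [ptrans_coe]
          unfold rT
          split_ifs <;> rfl
    · show Quot.mk _ (compRep (distB x₁ x₂ y z f₁ f₂ g) (distF x₁ x₂ y z f₁ f₂ g))
        = Quot.mk _ (idRep _)
      refine Quot.sound (hrel_of ?_ ?_)
      · funext pr
        obtain (⟨⟨a, b⟩, h⟩ | ⟨⟨a, b⟩, h⟩) := pr <;> rfl
      · have hgood : GoodFam (cop (pb f₁ g) (pb f₂ g))
            fun pr (_ : I) => (cop (pb f₁ g) (pb f₂ g)).map pr :=
          ⟨fun _ => continuous_const, fun gg pr _ => (cop (pb f₁ g) (pb f₂ g)).eqv gg pr⟩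
        refine (phtp_reflTrans hgood).congr (fun pr t => ?_) fun pr t => rfl
        obtain (⟨⟨a, b⟩, h⟩ | ⟨⟨a, b⟩, h⟩) := pr
        · show rT _ _ t = ((Path.refl (z.map (f₁.α a))).trans (Path.refl (z.map (f₁.α a)))) t
          rw [ptrans_coe]
          unfold rT
          split_ifs <;> rfl
        · show rT _ _ t = ((Path.refl (z.map (f₂.α a))).trans (Path.refl (z.map (f₂.α a)))) t
          rw [ptrans_coe]
          unfold rT
          split_ifs <;> rfl
end

section
/- Let G be a finite group, B a G-space, γ ∈ RO(ΠB) a representation of virtual dimension 0, and X an ex-CW(γ)-complex over B. Then for every n ≥ 0 the filtration quotient X^{γ+n}/_B X^{γ+n−1} is lax homotopy equivalent over B to the fiberwise wedge, over the (γ+n)-cells G×_H D(V_x) of X, of the parametrized spheres G₊∧_H S^{V_x, p∘x}, where x : G/H → X denotes the restriction of the characteristic map of the cell to the central orbit and p : X → B is the projection. -/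
/-!
STATEMENT 12. Let `G` be a finite group, `B` a `G`-space, `γ ∈ RO(ΠB)` a representation
of virtual dimension 0, and `X` an ex-CW(γ)-complex over `B`.  Then for every `n ≥ 0`
the filtration quotient `X^{γ+n}/_B X^{γ+n−1}` is lax homotopy equivalent over `B` to
the fiberwise wedge, over the `(γ+n)`-cells `G ×_H D(V_x)` of `X`, of the parametrized
spheres `G₊ ∧_H S^{V_x, p∘x}`, where `x : G/H → X` is the restriction of the
characteristic map of the cell to the central orbit and `p : X → B` is the projection.

Formalization notes.  Since the statement concerns a single filtration stage, we record
the `n`-th stage of an ex-CW(γ)-complex as `AttachData A X n`: the `(γ+n)`-cells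
`G ×_{H_c} D(V_c)` (with `V_c` an `n`-dimensional orthogonal `H_c`-representation; the
`RO(ΠB)`-condition on `γ` merely constrains which representations may occur at a given
center and plays no role in the conclusion, which holds for every admissible choice),
the characteristic maps `φ_c`, the attaching maps (landing in the previous skeleton
`A = X^{γ+n−1}`), and the pushout property of `X^{γ+n}` (the quotient-topology
condition `glue_quot` together with the universal property `glue_up`).  The fiberwise
quotient `X^{γ+n}/_B X^{γ+n−1}` (`fibQuot`) and the fiberwise wedge
`⋁_c G₊ ∧_{H_c} S^{V_c, p∘x_c}` (`wedgeSp`, with the sphere `S^V = D(V)/S(V)` and each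
sphere attached to `B` at the image of its cell center) are constructed as explicit
quotient ex-`G`-spaces.  A lax map is a `G`-map commuting with the sections and
commuting with the projections up to a `G`-homotopy rel the section; a lax homotopy
equivalence is a pair of lax maps whose composites are `G`-homotopic to the identities
through section-preserving `G`-homotopies.
-/

open unitInterval Topology

set_option linter.unusedSectionVars false

variable (G : Type) [Group G] [Finite G] [TopologicalSpace G] [DiscreteTopology G]
  (B : Type) [TopologicalSpace B] [MulAction G B] [ContinuousConstSMul G B]

/-- An ex-`G`-space over `B`. -/
structure ExSp : Type 1 where
  X : Type
  [topX : TopologicalSpace X]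
  [actX : MulAction G X]
  smul_cont : ∀ g : G, Continuous fun a : X => g • a
  p : X → B
  p_cont : Continuous p
  p_eqv : ∀ (g : G) (a : X), p (g • a) = g • p a
  s : B → X
  s_cont : Continuous s
  s_eqv : ∀ (g : G) (b : B), s (g • b) = g • s b
  p_s : ∀ b : B, p (s b) = b

attribute [instance] ExSp.topX ExSp.actX

variable {G B}

/-- A lax map of ex-`G`-spaces over `B`: a `G`-map commuting with the sections, and
commuting with the projections up to a `G`-homotopy rel the section. -/
structure LaxMap (X Y : ExSp G B) : Type where
  f : X.X → Y.X
  cont : Continuous f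
  eqv : ∀ (g : G) (a : X.X), f (g • a) = g • f a
  sect : ∀ b : B, f (X.s b) = Y.s b
  proj : ∃ Hh : I → X.X → B,
    (Continuous fun q : I × X.X => Hh q.1 q.2) ∧
    (∀ (t : I) (g : G) (a : X.X), Hh t (g • a) = g • Hh t a) ∧
    (∀ a, Hh 0 a = Y.p (f a)) ∧
    (∀ a, Hh 1 a = X.p a) ∧
    (∀ (t : I) (b : B), Hh t (X.s b) = b)

/-- Lax homotopy: a section-preserving `G`-homotopy. -/
def LaxHomotopic (X Y : ExSp G B) (f g : X.X → Y.X) : Prop :=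
  ∃ F : I → X.X → Y.X,
    (Continuous fun q : I × X.X => F q.1 q.2) ∧
    (∀ (t : I) (gg : G) (a : X.X), F t (gg • a) = gg • F t a) ∧
    (∀ a, F 0 a = f a) ∧
    (∀ a, F 1 a = g a) ∧
    (∀ (t : I) (b : B), F t (X.s b) = Y.s b)

/-- A lax homotopy equivalence of ex-`G`-spaces over `B`. -/
def IsLaxHtpyEquiv (X Y : ExSp G B) : Prop :=
  ∃ (f : LaxMap X Y) (k : LaxMap Y X),
    LaxHomotopic X X (k.f ∘ f.f) id ∧ LaxHomotopic Y Y (f.f ∘ k.f) id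

variable (G B)

/-- The data exhibiting `Xtot = X^{γ+n}` as obtained from `A = X^{γ+n−1}` by attaching
`(γ+n)`-cells `G ×_{H_c} D(V_c)`. -/
structure AttachData (A Xtot : ExSp G B) (n : ℕ) : Type 1 where
  /-- the indexing set of the `(γ+n)`-cells -/
  ι : Type
  /-- the isotropy subgroup `H_c` of the cell -/
  Hc : ι → Subgroup G
  /-- the `n`-dimensional orthogonal `H_c`-representation `V_c` -/
  V : ι → Type
  [nrm : ∀ c, NormedAddCommGroup (V c)]
  [ips : ∀ c, InnerProductSpace ℝ (V c)]
  [fd : ∀ c, FiniteDimensional ℝ (V c)]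
  dimV : ∀ c, Module.finrank ℝ (V c) = n
  /-- the orthogonal action of `H_c` on `V_c` -/
  ρ : ∀ c, ↥(Hc c) →* (V c ≃ₗᵢ[ℝ] V c)
  /-- the inclusion of the previous skeleton -/
  incl : A.X → Xtot.X
  incl_cont : Continuous incl
  incl_eqv : ∀ (g : G) (a : A.X), incl (g • a) = g • incl a
  incl_p : ∀ a, Xtot.p (incl a) = A.p a
  incl_s : ∀ b, incl (A.s b) = Xtot.s b
  /-- the characteristic maps `φ_c : G ×_{H_c} D(V_c) → X^{γ+n}`, recorded on
  `G × D(V_c)` -/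
  φ : ∀ c, G → {v : V c // ‖v‖ ≤ 1} → Xtot.X
  φ_cont : ∀ c g, Continuous (φ c g)
  φ_eqv : ∀ c (g₀ g : G) v, φ c (g₀ * g) v = g₀ • φ c g v
  /-- `φ_c` descends to the induced space `G ×_{H_c} D(V_c)` -/
  φ_ind : ∀ c (g : G) (h : ↥(Hc c)) (v : {v : V c // ‖v‖ ≤ 1}),
    φ c (g * h) v = φ c g ⟨ρ c h v.1, by rw [(ρ c h).norm_map]; exact v.2⟩
  /-- the attaching maps: on the boundary spheres, `φ_c` lands in the previous
  skeleton -/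
  attach : ∀ c, G → {v : V c // ‖v‖ ≤ 1} → A.X
  attach_cont : ∀ c g, Continuous (attach c g)
  φ_bdry : ∀ c (g : G) (v : {v : V c // ‖v‖ ≤ 1}), ‖v.1‖ = 1 →
    φ c g v = incl (attach c g v)
  /-- `X^{γ+n}` carries the quotient topology from `X^{γ+n−1} ⊔ ∐_c G × D(V_c)` … -/
  glue_quot : IsQuotientMap (fun u : A.X ⊕ Σ c : ι, G × {v : V c // ‖v‖ ≤ 1} =>
    Sum.elim incl (fun q => φ q.1 q.2.1 q.2.2) u)
  /-- … and satisfies the universal property of the pushout. -/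
  glue_up : ∀ (T : Type) [TopologicalSpace T] (fA : A.X → T)
    (fc : ∀ c, G → {v : V c // ‖v‖ ≤ 1} → T),
    Continuous fA → (∀ c g, Continuous (fc c g)) →
    (∀ c (g : G) (h : ↥(Hc c)) v,
      fc c (g * h) v = fc c g ⟨ρ c h v.1, by rw [(ρ c h).norm_map]; exact v.2⟩) →
    (∀ c (g : G) v, ‖v.1‖ = 1 → fc c g v = fA (attach c g v)) →
    ∃! F : Xtot.X → T, Continuous F ∧ (∀ a, F (incl a) = fA a) ∧
      (∀ c g v, F (φ c g v) = fc c g v)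

attribute [instance] AttachData.nrm AttachData.ips AttachData.fd

variable {G B}

section spaces

variable {A Xtot : ExSp G B} {n : ℕ} (D : AttachData G B A Xtot n)

/-! ### The filtration quotient `X^{γ+n}/_B X^{γ+n−1}` -/

/-- The relation collapsing the previous skeleton fiberwise to the section. -/
def quotRel (u v : Xtot.X) : Prop :=
  ∃ a₁ a₂ : A.X, u = D.incl a₁ ∧ v = D.incl a₂ ∧ A.p a₁ = A.p a₂

theorem quotRel_smul (g : G) {u v : Xtot.X} (h : quotRel D u v) :
    quotRel D (g • u) (g • v) := by
  obtain ⟨a₁, a₂, hu, hv, hp⟩ := h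
  exact ⟨g • a₁, g • a₂, by rw [hu, D.incl_eqv], by rw [hv, D.incl_eqv],
    by rw [A.p_eqv, A.p_eqv, hp]⟩

/-- The underlying `G`-action on the fiberwise quotient. -/
def quotSmul (g : G) : Quot (quotRel D) → Quot (quotRel D) :=
  Quot.lift (fun a => Quot.mk _ (g • a))
    (fun u v h => Quot.sound (quotRel_smul D g h))

/-- The filtration quotient `X^{γ+n}/_B X^{γ+n−1}`, as an ex-`G`-space over `B`. -/
noncomputable def fibQuot : ExSp G B where
  X := Quot (quotRel D)
  actX :=
    { smul := quotSmul D
      one_smul := by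
        intro x
        induction x using Quot.ind with
        | _ u => show Quot.mk _ ((1 : G) • u) = Quot.mk _ u; rw [one_smul]
      mul_smul := by
        intro g h x
        induction x using Quot.ind with
        | _ u => show Quot.mk _ ((g * h) • u) = Quot.mk _ (g • h • u); rw [mul_smul] }
  smul_cont g :=
    continuous_quot_lift _ (continuous_quot_mk.comp (Xtot.smul_cont g))
  p := Quot.lift Xtot.p (by
    rintro u v ⟨a₁, a₂, hu, hv, hp⟩
    rw [hu, hv, D.incl_p, D.incl_p, hp])
  p_cont := continuous_quot_lift _ Xtot.p_cont
  p_eqv := by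
    intro g x
    induction x using Quot.ind with
    | _ u => exact Xtot.p_eqv g u
  s b := Quot.mk _ (Xtot.s b)
  s_cont := continuous_quot_mk.comp Xtot.s_cont
  s_eqv g b := by
    show Quot.mk _ (Xtot.s (g • b)) = Quot.mk _ (g • Xtot.s b)
    rw [Xtot.s_eqv]
  p_s b := Xtot.p_s b

/-! ### The fiberwise wedge of parametrized spheres `⋁_c G₊ ∧_{H_c} S^{V_c, p∘x_c}` -/

/-- The wedge relation: `(g⋅h, v) ∼ (g, h⋅v)` (inducing `G ×_{H_c} S^{V_c}`), and each
boundary sphere `S(V_c)` of a disk (that is, the point at infinity of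
`S^{V_c} = D(V_c)/S(V_c)`) is glued to `B` at the image `p(x_c(g))` of the center of
the cell. -/
inductive wedgeRel :
    (B ⊕ Σ c : D.ι, G × {v : D.V c // ‖v‖ ≤ 1}) →
    (B ⊕ Σ c : D.ι, G × {v : D.V c // ‖v‖ ≤ 1}) → Prop
  | ind (c : D.ι) (g : G) (h : ↥(D.Hc c)) (v : {v : D.V c // ‖v‖ ≤ 1}) :
      wedgeRel (Sum.inr ⟨c, g * h, v⟩)
        (Sum.inr ⟨c, g, ⟨D.ρ c h v.1, by rw [(D.ρ c h).norm_map]; exact v.2⟩⟩)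
  | bdry (c : D.ι) (g : G) (v : {v : D.V c // ‖v‖ ≤ 1}) (hv : ‖v.1‖ = 1) :
      wedgeRel (Sum.inr ⟨c, g, v⟩)
        (Sum.inl (Xtot.p (D.φ c g ⟨0, by simp⟩)))

/-- The underlying `G`-action on the wedge. -/
def wedgeSmulFun (g₀ : G) :
    (B ⊕ Σ c : D.ι, G × {v : D.V c // ‖v‖ ≤ 1}) →
    (B ⊕ Σ c : D.ι, G × {v : D.V c // ‖v‖ ≤ 1}) :=
  Sum.elim (fun b => Sum.inl (g₀ • b))
    (fun q => Sum.inr ⟨q.1, g₀ * q.2.1, q.2.2⟩)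

theorem wedgeSmul_sound (g₀ : G) {u v} (h : wedgeRel D u v) :
    Quot.mk (wedgeRel D) (wedgeSmulFun D g₀ u) = Quot.mk (wedgeRel D) (wedgeSmulFun D g₀ v) := by
  cases h with
  | ind c g h v =>
    show Quot.mk (wedgeRel D)
        ((Sum.inr ⟨c, g₀ * (g * h), v⟩ : B ⊕ Σ c : D.ι, G × {v : D.V c // ‖v‖ ≤ 1})) = _
    rw [← mul_assoc]
    exact Quot.sound (wedgeRel.ind c (g₀ * g) h v)
  | bdry c g v hv =>
    show Quot.mk (wedgeRel D)
        ((Sum.inr ⟨c, g₀ * g, v⟩ : B ⊕ Σ c : D.ι, G × {v : D.V c // ‖v‖ ≤ 1}))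
      = Quot.mk (wedgeRel D) (Sum.inl (g₀ • Xtot.p (D.φ c g ⟨0, by simp⟩)))
    rw [← Xtot.p_eqv, ← D.φ_eqv]
    exact Quot.sound (wedgeRel.bdry c (g₀ * g) v hv)

/-- The projection of the wedge: each sphere sits over the image of its cell center. -/
def wedgeProjFun : (B ⊕ Σ c : D.ι, G × {v : D.V c // ‖v‖ ≤ 1}) → B :=
  Sum.elim id (fun q => Xtot.p (D.φ q.1 q.2.1 ⟨0, by simp⟩))

theorem wedgeProj_sound {u v} (h : wedgeRel D u v) :
    wedgeProjFun D u = wedgeProjFun D v := by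
  cases h with
  | ind c g h v =>
    show Xtot.p (D.φ c (g * h) ⟨0, by simp⟩) = Xtot.p (D.φ c g ⟨0, by simp⟩)
    rw [D.φ_ind]
    congr 2
    apply Subtype.ext
    simp
  | bdry c g v hv => rfl

/-- The fiberwise wedge of the parametrized spheres `G₊ ∧_{H_c} S^{V_c, p∘x_c}`, as an
ex-`G`-space over `B`. -/
noncomputable def wedgeSp : ExSp G B where
  X := Quot (wedgeRel D)
  actX :=
    { smul := fun g₀ => Quot.lift (fun u => Quot.mk _ (wedgeSmulFun D g₀ u))
        (fun _ _ h => wedgeSmul_sound D g₀ h)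
      one_smul := by
        intro x
        induction x using Quot.ind with
        | _ u =>
          rcases u with b | q
          · show Quot.mk (wedgeRel D)
              (Sum.inl ((1 : G) • b)) = Quot.mk (wedgeRel D) (Sum.inl b)
            rw [one_smul]
          · show Quot.mk (wedgeRel D)
                ((Sum.inr ⟨q.1, 1 * q.2.1, q.2.2⟩ :
                  B ⊕ Σ c : D.ι, G × {v : D.V c // ‖v‖ ≤ 1}))
              = Quot.mk (wedgeRel D) (Sum.inr q)
            rw [one_mul]
      mul_smul := by
        intro g h x
        induction x using Quot.ind with
        | _ u =>
          rcases u with b | q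
          · show Quot.mk (wedgeRel D) (Sum.inl ((g * h) • b))
              = Quot.mk (wedgeRel D) (Sum.inl (g • h • b))
            rw [mul_smul]
          · show Quot.mk (wedgeRel D)
                ((Sum.inr ⟨q.1, (g * h) * q.2.1, q.2.2⟩ :
                  B ⊕ Σ c : D.ι, G × {v : D.V c // ‖v‖ ≤ 1}))
              = Quot.mk (wedgeRel D)
                ((Sum.inr ⟨q.1, g * (h * q.2.1), q.2.2⟩ :
                  B ⊕ Σ c : D.ι, G × {v : D.V c // ‖v‖ ≤ 1}))
            rw [mul_assoc] }
  smul_cont g₀ := by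
    apply continuous_quot_lift
    apply continuous_quot_mk.comp
    unfold wedgeSmulFun
    apply Continuous.sumElim
    · exact continuous_inl.comp (continuous_const_smul g₀)
    · apply continuous_sigma
      intro c
      exact continuous_inr.comp (continuous_sigmaMk.comp
        ((continuous_mul_left g₀).comp continuous_fst |>.prodMk continuous_snd))
  p := Quot.lift (wedgeProjFun D) (fun _ _ h => wedgeProj_sound D h)
  p_cont := by
    apply continuous_quot_lift
    unfold wedgeProjFun
    apply Continuous.sumElim continuous_id
    apply continuous_sigma
    intro c
    exact (continuous_of_discreteTopology (α := G)
      (f := fun g => Xtot.p (D.φ c g ⟨0, by simp⟩))).comp continuous_fst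
  p_eqv := by
    intro g x
    induction x using Quot.ind with
    | _ u =>
      rcases u with b | q
      · rfl
      · show Xtot.p (D.φ q.1 (g * q.2.1) ⟨0, by simp⟩) = g • Xtot.p (D.φ q.1 q.2.1 ⟨0, by simp⟩)
        rw [D.φ_eqv, Xtot.p_eqv]
  s b := Quot.mk _ (Sum.inl b)
  s_cont := continuous_quot_mk.comp continuous_inl
  s_eqv g b := rfl
  p_s b := rfl

/-! ### Auxiliary machinery for the proof -/

section prelim
variable {V : Type} [NormedAddCommGroup V] [NormedSpace ℝ V]

/-- Retraction of a normed space onto its unit ball. -/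
noncomputable def pB (x : V) : {v : V // ‖v‖ ≤ 1} :=
  ⟨(max 1 ‖x‖)⁻¹ • x, by
    have h1 : (0:ℝ) < max 1 ‖x‖ := lt_of_lt_of_le one_pos (le_max_left _ _)
    rw [norm_smul, norm_inv, Real.norm_eq_abs, abs_of_pos h1, inv_mul_le_iff₀ h1, mul_one]
    exact le_max_right _ _⟩

theorem pB_of_le {x : V} (h : ‖x‖ ≤ 1) : (pB x).1 = x := by
  simp [pB, max_eq_left h]

theorem pB_eq_of_le {x : V} (h : ‖x‖ ≤ 1) : pB x = ⟨x, h⟩ := Subtype.ext (pB_of_le h)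

theorem pB_cont : Continuous fun x : V => pB x := by
  apply Continuous.subtype_mk
  exact ((continuous_const.max continuous_norm).inv₀
    (fun x => ne_of_gt (lt_of_lt_of_le one_pos (le_max_left _ _)))).smul continuous_id

theorem pB_isom (e : V ≃ₗᵢ[ℝ] V) (x : V) : (pB (e x)).1 = e (pB x).1 := by
  simp [pB, e.norm_map, map_smul]

end prelim

theorem contDiscreteProd {G X Y : Type} [TopologicalSpace G] [DiscreteTopology G]
    [TopologicalSpace X] [TopologicalSpace Y] (f : G × X → Y)
    (h : ∀ g, Continuous fun x => f (g, x)) : Continuous f := by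
  rw [continuous_iff_continuousAt]
  rintro ⟨g, x⟩
  have h1 : ContinuousAt (fun p : G × X => f (g, p.2)) (g, x) :=
    ((h g).comp continuous_snd).continuousAt
  have hm : {p : G × X | p.1 = g} ∈ nhds (g, x) :=
    IsOpen.mem_nhds ((isOpen_discrete {g}).preimage continuous_fst) rfl
  exact h1.congr (Filter.eventually_of_mem hm fun p hp => by
    obtain ⟨pg, px⟩ := p; cases hp; rfl)

theorem cont_eval {X Y : Type} [TopologicalSpace X] [TopologicalSpace Y]
    (k : X → C(unitInterval, Y)) (hk : Continuous k) :
    Continuous fun q : unitInterval × X => k q.2 q.1 :=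
  continuous_eval.comp ((hk.comp continuous_snd).prodMk continuous_fst)

variable {A Xtot : ExSp G B} {n : ℕ} (D : AttachData G B A Xtot n)

/-- Case analysis for the filtration quotient. -/
theorem FQ_cases (x : Quot (quotRel D)) :
    (∃ a, x = Quot.mk _ (D.incl a)) ∨ ∃ c g v, x = Quot.mk _ (D.φ c g v) := by
  induction x using Quot.ind with
  | _ u =>
    obtain ⟨w, hw⟩ := D.glue_quot.surjective u
    cases w with
    | inl a => exact Or.inl ⟨a, by rw [← hw]; rfl⟩
    | inr q => exact Or.inr ⟨q.1, q.2.1, q.2.2, by rw [← hw]; rfl⟩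

/-- Building continuous maps out of the filtration quotient. -/
noncomputable def FQbuild (T : Type) [TopologicalSpace T]
    (fA : A.X → T) (fc : ∀ c, G → {v : D.V c // ‖v‖ ≤ 1} → T)
    (hA : Continuous fA) (hc : ∀ c g, Continuous (fc c g))
    (hind : ∀ c (g : G) (h : ↥(D.Hc c)) v,
      fc c (g * h) v = fc c g ⟨D.ρ c h v.1, by rw [(D.ρ c h).norm_map]; exact v.2⟩)
    (hbd : ∀ c (g : G) v, ‖v.1‖ = 1 → fc c g v = fA (D.attach c g v))
    (hfib : ∀ a₁ a₂, A.p a₁ = A.p a₂ → fA a₁ = fA a₂) :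
    {F : Quot (quotRel D) → T //
      Continuous F ∧ (∀ a, F (Quot.mk _ (D.incl a)) = fA a) ∧
      ∀ c g v, F (Quot.mk _ (D.φ c g v)) = fc c g v} := by
  classical
  have hex := (D.glue_up T fA fc hA hc hind hbd).exists
  obtain ⟨hFc, hFA, hFφ⟩ := hex.choose_spec
  refine ⟨Quot.lift hex.choose ?_, continuous_quot_lift _ hFc,
    fun a => hFA a, fun c g v => hFφ c g v⟩
  rintro u v ⟨a₁, a₂, rfl, rfl, hp⟩
  rw [hFA, hFA]; exact hfib _ _ hp

/-- Building continuous maps out of the wedge. -/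
noncomputable def Wbuild (T : Type) [TopologicalSpace T]
    (fB : B → T) (fc : ∀ c, G → {v : D.V c // ‖v‖ ≤ 1} → T)
    (hB : Continuous fB) (hc : ∀ c g, Continuous (fc c g))
    (hind : ∀ c (g : G) (h : ↥(D.Hc c)) v,
      fc c (g * h) v = fc c g ⟨D.ρ c h v.1, by rw [(D.ρ c h).norm_map]; exact v.2⟩)
    (hbd : ∀ c (g : G) v, ‖v.1‖ = 1 → fc c g v = fB (Xtot.p (D.φ c g ⟨0, by simp⟩))) :
    {F : Quot (wedgeRel D) → T //
      Continuous F ∧ (∀ b, F (Quot.mk _ (Sum.inl b)) = fB b) ∧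
      ∀ c g v, F (Quot.mk _ (Sum.inr ⟨c, g, v⟩)) = fc c g v} := by
  refine ⟨Quot.lift (Sum.elim fB fun q => fc q.1 q.2.1 q.2.2) ?_, ?_,
    fun b => rfl, fun c g v => rfl⟩
  · rintro u v h
    cases h with
    | ind c g h v => exact hind c g h v
    | bdry c g v hv => exact hbd c g v hv
  · apply continuous_quot_lift
    apply Continuous.sumElim hB
    apply continuous_sigma; intro c
    exact contDiscreteProd _ fun g => hc c g

/-! ### Collapse lemmas -/

theorem FQ_collapse (c : D.ι) (g : G) (v : {v : D.V c // ‖v‖ ≤ 1}) (hv : ‖v.1‖ = 1) :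
    Quot.mk (quotRel D) (D.φ c g v) = Quot.mk _ (Xtot.s (Xtot.p (D.φ c g v))) := by
  rw [D.φ_bdry c g v hv, D.incl_p, ← D.incl_s]
  exact Quot.sound ⟨D.attach c g v, A.s (A.p (D.attach c g v)), rfl, rfl, (A.p_s _).symm⟩

theorem W_collapse (c : D.ι) (g : G) (v : {v : D.V c // ‖v‖ ≤ 1}) (hv : ‖v.1‖ = 1) :
    Quot.mk (wedgeRel D) (Sum.inr ⟨c, g, v⟩) =
      Quot.mk _ (Sum.inl (Xtot.p (D.φ c g ⟨0, by simp⟩))) :=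
  Quot.sound (wedgeRel.bdry c g v hv)

theorem pB_rho (c : D.ι) (h : ↥(D.Hc c)) (x : D.V c) :
    (⟨D.ρ c h (pB x).1, by rw [(D.ρ c h).norm_map]; exact (pB x).2⟩ :
      {v : D.V c // ‖v‖ ≤ 1}) = pB (D.ρ c h x) :=
  (Subtype.ext (pB_isom (D.ρ c h) x)).symm

/-! ### The map `α : wedge → quotient` -/

/-- value of `α` on a cell. -/
noncomputable def alfc (c : D.ι) (g : G) (v : {v : D.V c // ‖v‖ ≤ 1}) :
    Quot (quotRel D) :=
  if ‖v.1‖ ≤ 1/2 then Quot.mk _ (D.φ c g (pB ((2:ℝ) • v.1)))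
  else Quot.mk _ (Xtot.s (Xtot.p (D.φ c g
    (pB (((2 - 2*‖v.1‖) / max (1/2) ‖v.1‖) • v.1)))))

theorem alfc_cont (c : D.ι) (g : G) : Continuous (alfc D c g) := by
  apply Continuous.if_le
  · exact continuous_quot_mk.comp ((D.φ_cont c g).comp
      (pB_cont.comp (continuous_const.smul continuous_subtype_val)))
  · refine continuous_quot_mk.comp (Xtot.s_cont.comp (Xtot.p_cont.comp
      ((D.φ_cont c g).comp (pB_cont.comp (Continuous.smul ?_ continuous_subtype_val)))))
    exact (continuous_const.sub
        (continuous_const.mul continuous_subtype_val.norm)).div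
      (continuous_const.max continuous_subtype_val.norm)
      (fun v => ne_of_gt (lt_of_lt_of_le (by norm_num) (le_max_left _ _)))
  · exact continuous_subtype_val.norm
  · exact continuous_const
  · intro v hv
    have h2 : ‖(2:ℝ) • v.1‖ = 1 := by
      rw [norm_smul, Real.norm_ofNat, hv]; norm_num
    have hc : ((2 - 2*‖v.1‖) / max (1/2) ‖v.1‖ : ℝ) = 2 := by
      rw [hv]; norm_num
    rw [hc, FQ_collapse D c g (pB ((2:ℝ) • v.1)) (by rw [pB_of_le h2.le, h2])]

theorem alfc_ind (c : D.ι) (g : G) (h : ↥(D.Hc c)) (v : {v : D.V c // ‖v‖ ≤ 1}) :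
    alfc D c (g * h) v =
      alfc D c g ⟨D.ρ c h v.1, by rw [(D.ρ c h).norm_map]; exact v.2⟩ := by
  simp only [alfc, LinearIsometryEquiv.norm_map]
  by_cases hv : ‖v.1‖ ≤ 1/2
  · rw [if_pos hv, if_pos hv, D.φ_ind, pB_rho, map_smul]
  · rw [if_neg hv, if_neg hv, D.φ_ind, pB_rho, map_smul]

theorem alfc_bd (c : D.ι) (g : G) (v : {v : D.V c // ‖v‖ ≤ 1}) (hv : ‖v.1‖ = 1) :
    alfc D c g v = Quot.mk _ (Xtot.s (Xtot.p (D.φ c g ⟨0, by simp⟩))) := by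
  unfold alfc
  have h0 : ((2 - 2*1) / max (1/2) 1 : ℝ) = 0 := by norm_num
  rw [if_neg (by rw [hv]; norm_num), hv, h0, zero_smul,
    pB_eq_of_le (by simp : ‖(0 : D.V c)‖ ≤ 1)]

/-- `α : wedge → quotient`, packaged. -/
noncomputable def alW : {F : Quot (wedgeRel D) → Quot (quotRel D) //
    Continuous F ∧ (∀ b, F (Quot.mk _ (Sum.inl b)) = Quot.mk _ (Xtot.s b)) ∧
    ∀ c g v, F (Quot.mk _ (Sum.inr ⟨c, g, v⟩)) = alfc D c g v} :=
  Wbuild D _ (fun b => Quot.mk _ (Xtot.s b)) (alfc D)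
    (continuous_quot_mk.comp Xtot.s_cont) (alfc_cont D) (alfc_ind D)
    (fun c g v hv => alfc_bd D c g v hv)

/-! ### The map `β : quotient → wedge` -/

/-- value of `β` on a cell. -/
noncomputable def befc (c : D.ι) (g : G) (v : {v : D.V c // ‖v‖ ≤ 1}) :
    Quot (wedgeRel D) :=
  if ‖v.1‖ ≤ 1/2 then Quot.mk _ (Sum.inr ⟨c, g, pB ((2:ℝ) • v.1)⟩)
  else Quot.mk _ (Sum.inl (Xtot.p (D.φ c g
    (pB (((2*‖v.1‖ - 1) / max (1/2) ‖v.1‖) • v.1)))))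

theorem befc_cont (c : D.ι) (g : G) : Continuous (befc D c g) := by
  apply Continuous.if_le
  · exact continuous_quot_mk.comp (continuous_inr.comp (continuous_sigmaMk.comp
      (continuous_const.prodMk (pB_cont.comp
        (continuous_const.smul continuous_subtype_val)))))
  · refine continuous_quot_mk.comp (continuous_inl.comp (Xtot.p_cont.comp
      ((D.φ_cont c g).comp (pB_cont.comp (Continuous.smul ?_ continuous_subtype_val)))))
    exact ((continuous_const.mul continuous_subtype_val.norm).sub continuous_const).div
      (continuous_const.max continuous_subtype_val.norm)
      (fun v => ne_of_gt (lt_of_lt_of_le (by norm_num) (le_max_left _ _)))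
  · exact continuous_subtype_val.norm
  · exact continuous_const
  · intro v hv
    have h2 : ‖(2:ℝ) • v.1‖ = 1 := by
      rw [norm_smul, Real.norm_ofNat, hv]; norm_num
    have hc : ((2*‖v.1‖ - 1) / max (1/2) ‖v.1‖ : ℝ) = 0 := by rw [hv]; norm_num
    rw [hc, zero_smul, pB_eq_of_le (by simp : ‖(0 : D.V c)‖ ≤ 1),
      W_collapse D c g (pB ((2:ℝ) • v.1)) (by rw [pB_of_le h2.le, h2])]

theorem befc_ind (c : D.ι) (g : G) (h : ↥(D.Hc c)) (v : {v : D.V c // ‖v‖ ≤ 1}) :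
    befc D c (g * h) v =
      befc D c g ⟨D.ρ c h v.1, by rw [(D.ρ c h).norm_map]; exact v.2⟩ := by
  simp only [befc, LinearIsometryEquiv.norm_map]
  by_cases hv : ‖v.1‖ ≤ 1/2
  · rw [if_pos hv, if_pos hv]
    have := Quot.sound (wedgeRel.ind c g h (pB ((2:ℝ) • v.1)))
    rw [this, pB_rho, map_smul]
  · rw [if_neg hv, if_neg hv, D.φ_ind, pB_rho, map_smul]

theorem befc_bd (c : D.ι) (g : G) (v : {v : D.V c // ‖v‖ ≤ 1}) (hv : ‖v.1‖ = 1) :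
    befc D c g v = Quot.mk _ (Sum.inl (A.p (D.attach c g v))) := by
  unfold befc
  have h1 : ((2*‖v.1‖ - 1) / max (1/2) ‖v.1‖ : ℝ) = 1 := by rw [hv]; norm_num
  rw [if_neg (by rw [hv]; norm_num), h1, one_smul, pB_eq_of_le v.2,
    D.φ_bdry c g v hv, D.incl_p]

/-- `β : quotient → wedge`, packaged. -/
noncomputable def beW : {F : Quot (quotRel D) → Quot (wedgeRel D) //
    Continuous F ∧ (∀ a, F (Quot.mk _ (D.incl a)) = Quot.mk _ (Sum.inl (A.p a))) ∧
    ∀ c g v, F (Quot.mk _ (D.φ c g v)) = befc D c g v} :=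
  FQbuild D _ (fun a => Quot.mk _ (Sum.inl (A.p a))) (befc D)
    (continuous_quot_mk.comp (continuous_inl.comp A.p_cont)) (befc_cont D)
    (befc_ind D) (befc_bd D) (fun a₁ a₂ hp => by rw [hp])

/-! ### The homotopy `α ∘ β ≃ id` on the filtration quotient -/

/-- The profile function for the homotopy on the quotient. -/
noncomputable def eF (t r : ℝ) : ℝ := max (2 + 3*t - 4*r) (2*r - 1)

/-- The underlying jointly continuous map of the homotopy, on a cell. -/
noncomputable def Hcm (c : D.ι) (g : G) :
    C({v : D.V c // ‖v‖ ≤ 1} × I, Quot (quotRel D)) where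
  toFun q :=
    if 4*‖q.1.1‖ ≤ 1 + 3*(q.2 : ℝ) then
      Quot.mk _ (D.φ c g (pB ((4/(1 + 3*(q.2 : ℝ))) • q.1.1)))
    else
      Quot.mk _ (Xtot.s (Xtot.p (D.φ c g
        (pB ((eF (q.2 : ℝ) ‖q.1.1‖ / max (1/4) ‖q.1.1‖) • q.1.1)))))
  continuous_toFun := by
    have hv : Continuous fun q : {v : D.V c // ‖v‖ ≤ 1} × I => q.1.1 :=
      continuous_subtype_val.comp continuous_fst
    have ht : Continuous fun q : {v : D.V c // ‖v‖ ≤ 1} × I => (q.2 : ℝ) :=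
      continuous_subtype_val.comp continuous_snd
    have hden : Continuous fun q : {v : D.V c // ‖v‖ ≤ 1} × I => (1 + 3*(q.2 : ℝ)) :=
      continuous_const.add (continuous_const.mul ht)
    have hden0 : ∀ q : {v : D.V c // ‖v‖ ≤ 1} × I, (1 + 3*(q.2 : ℝ)) ≠ 0 := by
      intro q; have := q.2.2.1; positivity
    apply Continuous.if_le
    · exact continuous_quot_mk.comp ((D.φ_cont c g).comp (pB_cont.comp
        ((continuous_const.div hden hden0).smul hv)))
    · refine continuous_quot_mk.comp (Xtot.s_cont.comp (Xtot.p_cont.comp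
        ((D.φ_cont c g).comp (pB_cont.comp (Continuous.smul ?_ hv)))))
      refine Continuous.div ?_ (continuous_const.max hv.norm)
        (fun q => ne_of_gt (lt_of_lt_of_le (by norm_num) (le_max_left _ _)))
      exact ((continuous_const.add (continuous_const.mul ht)).sub
        (continuous_const.mul hv.norm)).max
        ((continuous_const.mul hv.norm).sub continuous_const)
    · exact continuous_const.mul hv.norm
    · exact hden
    · intro q hq
      set r := ‖q.1.1‖ with hrdef
      have hr4 : (1/4 : ℝ) ≤ r := by nlinarith [q.2.2.1]
      have hr0 : (0:ℝ) < r := by nlinarith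
      have h1 : (4/(1 + 3*(q.2 : ℝ)) : ℝ) = 1/r := by
        rw [← hq]; rw [div_eq_div_iff (by nlinarith : (4*r:ℝ) ≠ 0) (ne_of_gt hr0)]; ring
      have h2 : (eF (q.2 : ℝ) r / max (1/4) r : ℝ) = 1/r := by
        have he : eF (q.2 : ℝ) r = 1 := by
          have h2r : 2*r - 1 ≤ 1 := by nlinarith [q.1.2]
          have : 2 + 3*(q.2 : ℝ) - 4*r = 1 := by nlinarith
          rw [eF, this, max_eq_left h2r]
        rw [he, max_eq_right hr4]
      have hnorm : ‖(1/r : ℝ) • q.1.1‖ = 1 := by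
        rw [norm_smul, Real.norm_eq_abs, abs_of_pos (by positivity), ← hrdef,
          one_div, inv_mul_cancel₀ (ne_of_gt hr0)]
      have hn : ‖(pB ((1/r : ℝ) • q.1.1)).1‖ = 1 := by rw [pB_of_le hnorm.le, hnorm]
      rw [h1, h2, FQ_collapse D c g _ hn]

theorem Hcm_apply (c : D.ι) (g : G) (v : {v : D.V c // ‖v‖ ≤ 1}) (t : I) :
    Hcm D c g (v, t) =
      (if 4*‖v.1‖ ≤ 1 + 3*(t : ℝ) then
        Quot.mk _ (D.φ c g (pB ((4/(1 + 3*(t : ℝ))) • v.1)))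
      else
        Quot.mk _ (Xtot.s (Xtot.p (D.φ c g
          (pB ((eF (t : ℝ) ‖v.1‖ / max (1/4) ‖v.1‖) • v.1)))))) := rfl

/-- The homotopy on the quotient, on a cell, as a map into the path space. -/
noncomputable def Hfc (c : D.ι) (g : G) (v : {v : D.V c // ‖v‖ ≤ 1}) :
    C(I, Quot (quotRel D)) :=
  (Hcm D c g).curry v

theorem Hfc_apply (c : D.ι) (g : G) (v : {v : D.V c // ‖v‖ ≤ 1}) (t : I) :
    Hfc D c g v t =
      (if 4*‖v.1‖ ≤ 1 + 3*(t : ℝ) then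
        Quot.mk _ (D.φ c g (pB ((4/(1 + 3*(t : ℝ))) • v.1)))
      else
        Quot.mk _ (Xtot.s (Xtot.p (D.φ c g
          (pB ((eF (t : ℝ) ‖v.1‖ / max (1/4) ‖v.1‖) • v.1)))))) := rfl

theorem Hfc_ind (c : D.ι) (g : G) (h : ↥(D.Hc c)) (v : {v : D.V c // ‖v‖ ≤ 1}) :
    Hfc D c (g * h) v =
      Hfc D c g ⟨D.ρ c h v.1, by rw [(D.ρ c h).norm_map]; exact v.2⟩ := by
  ext t
  rw [Hfc_apply, Hfc_apply]
  simp only [LinearIsometryEquiv.norm_map]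
  by_cases hv : 4*‖v.1‖ ≤ 1 + 3*(t : ℝ)
  · rw [if_pos hv, if_pos hv, D.φ_ind, pB_rho, map_smul]
  · rw [if_neg hv, if_neg hv, D.φ_ind, pB_rho, map_smul]

theorem Hfc_bd (c : D.ι) (g : G) (v : {v : D.V c // ‖v‖ ≤ 1}) (hv : ‖v.1‖ = 1) :
    Hfc D c g v = ContinuousMap.const I (Quot.mk _ (D.incl (D.attach c g v))) := by
  ext t
  rw [Hfc_apply, hv, ContinuousMap.const_apply]
  by_cases hc : 4*(1:ℝ) ≤ 1 + 3*(t : ℝ)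
  · have ht : (t : ℝ) = 1 := le_antisymm t.2.2 (by linarith)
    have h1 : (4/(1 + 3*(t : ℝ)) : ℝ) = 1 := by rw [ht]; norm_num
    rw [if_pos hc, h1, one_smul, pB_eq_of_le v.2, D.φ_bdry c g v hv]
  · have he : eF (t : ℝ) 1 = 1 := by
      rw [eF, max_eq_right (by nlinarith [t.2.2])]; ring
    have h2 : (eF (t : ℝ) 1 / max (1/4) 1 : ℝ) = 1 := by rw [he]; norm_num
    rw [if_neg hc, h2, one_smul, pB_eq_of_le v.2, D.φ_bdry c g v hv, D.incl_p,
      ← D.incl_s]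
    exact (Quot.sound ⟨_, _, rfl, rfl, A.p_s (A.p (D.attach c g v))⟩)

/-- The packaged homotopy on the filtration quotient. -/
noncomputable def HFQ : {F : Quot (quotRel D) → C(I, Quot (quotRel D)) //
    Continuous F ∧
    (∀ a, F (Quot.mk _ (D.incl a)) =
      ContinuousMap.const I (Quot.mk _ (D.incl a))) ∧
    ∀ c g v, F (Quot.mk _ (D.φ c g v)) = Hfc D c g v} :=
  FQbuild D _ (fun a => ContinuousMap.const I (Quot.mk _ (D.incl a))) (Hfc D)
    ((map_continuous ContinuousMap.const').comp
      (continuous_quot_mk.comp D.incl_cont))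
    (fun c g => ((Hcm D c g).curry).continuous)
    (Hfc_ind D) (Hfc_bd D)
    (fun a₁ a₂ hp => by
      exact congrArg _ (Quot.sound ⟨a₁, a₂, rfl, rfl, hp⟩))

theorem FQ_incl_s (b : B) :
    Quot.mk (quotRel D) (Xtot.s b) = Quot.mk _ (D.incl (A.s b)) := by
  rw [D.incl_s]

theorem HFQ_one (x : Quot (quotRel D)) : (HFQ D).1 x 1 = x := by
  rcases FQ_cases D x with ⟨a, rfl⟩ | ⟨c, g, v, rfl⟩
  · rw [(HFQ D).2.2.1 a]; rfl
  · have hco : ((1:I):ℝ) = 1 := rfl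
    rw [(HFQ D).2.2.2, Hfc_apply,
      if_pos (show 4*‖v.1‖ ≤ 1 + 3*((1:I):ℝ) by rw [hco]; nlinarith [v.2]),
      show (4/(1 + 3*((1:I):ℝ)) : ℝ) = 1 by rw [hco]; norm_num,
      one_smul, pB_eq_of_le v.2]

theorem HFQ_sect (t : I) (b : B) :
    (HFQ D).1 (Quot.mk _ (Xtot.s b)) t = Quot.mk _ (Xtot.s b) := by
  rw [FQ_incl_s, (HFQ D).2.2.1]; rfl

theorem HFQ_eqv (t : I) (g₀ : G) (x : Quot (quotRel D)) :
    (HFQ D).1 (quotSmul D g₀ x) t = quotSmul D g₀ ((HFQ D).1 x t) := by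
  rcases FQ_cases D x with ⟨a, rfl⟩ | ⟨c, g, v, rfl⟩
  · show (HFQ D).1 (Quot.mk _ (g₀ • D.incl a)) t = quotSmul D g₀ ((HFQ D).1 (Quot.mk _ (D.incl a)) t)
    rw [← D.incl_eqv, (HFQ D).2.2.1, (HFQ D).2.2.1]
    show Quot.mk _ (D.incl (g₀ • a)) = Quot.mk _ (g₀ • D.incl a)
    rw [D.incl_eqv]
  · show (HFQ D).1 (Quot.mk _ (g₀ • D.φ c g v)) t = quotSmul D g₀ ((HFQ D).1 (Quot.mk _ (D.φ c g v)) t)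
    rw [← D.φ_eqv, (HFQ D).2.2.2, (HFQ D).2.2.2, Hfc_apply, Hfc_apply]
    by_cases hv : 4*‖v.1‖ ≤ 1 + 3*(t : ℝ)
    · rw [if_pos hv, if_pos hv]
      show Quot.mk _ (D.φ c (g₀ * g) _) = Quot.mk _ (g₀ • D.φ c g _)
      rw [D.φ_eqv]
    · rw [if_neg hv, if_neg hv]
      show Quot.mk _ (Xtot.s (Xtot.p (D.φ c (g₀ * g) _))) =
        Quot.mk _ (g₀ • Xtot.s (Xtot.p (D.φ c g _)))
      rw [D.φ_eqv, Xtot.p_eqv, Xtot.s_eqv]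

theorem HFQ_zero (x : Quot (quotRel D)) :
    (HFQ D).1 x 0 = (alW D).1 ((beW D).1 x) := by
  rcases FQ_cases D x with ⟨a, rfl⟩ | ⟨c, g, v, rfl⟩
  · rw [(HFQ D).2.2.1, (beW D).2.2.1, (alW D).2.2.1]
    show Quot.mk _ (D.incl a) = _
    rw [← D.incl_s]
    exact Quot.sound ⟨a, A.s (A.p a), rfl, rfl, (A.p_s _).symm⟩
  · rw [(HFQ D).2.2.2, (beW D).2.2.2, Hfc_apply]
    set r := ‖v.1‖ with hrdef
    have hr0 : 0 ≤ r := norm_nonneg _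
    have hr1 : r ≤ 1 := v.2
    have hco : ((0:I):ℝ) = 0 := rfl
    by_cases h12 : r ≤ 1/2
    · -- β takes the inner branch
      rw [befc, if_pos h12, (alW D).2.2.2]
      have hpb : (pB ((2:ℝ) • v.1)).1 = (2:ℝ) • v.1 :=
        pB_of_le (by rw [norm_smul, Real.norm_ofNat]; linarith)
      have hn2 : ‖(pB ((2:ℝ) • v.1)).1‖ = 2*r := by
        rw [hpb, norm_smul, Real.norm_ofNat]
      have hs : ‖(2:ℝ) • v.1‖ = 2*r := by rw [norm_smul, Real.norm_ofNat]
      by_cases h14 : r ≤ 1/4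
      · -- inner-inner
        rw [if_pos (show 4*r ≤ 1 + 3*((0:I):ℝ) by rw [hco]; linarith),
          alfc, if_pos (by rw [hn2]; linarith), hpb, smul_smul,
          show ((2:ℝ)*2) = 4/(1 + 3*((0:I):ℝ)) by rw [hco]; norm_num]
      · -- middle region
        rw [if_neg (show ¬(4*r ≤ 1 + 3*((0:I):ℝ)) by rw [hco]; push_neg; linarith),
          alfc, if_neg (by rw [hn2]; push_neg; linarith), hpb, hs, smul_smul]
        have he : eF ((0:I):ℝ) r = 2 - 4*r := by
          rw [hco, eF, max_eq_left (by linarith)]; ring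
        have hsc : ((2 - 2*(2*r)) / max (1/2) (2*r) * 2 : ℝ)
            = eF ((0:I):ℝ) r / max (1/4) r := by
          rw [he, max_eq_right (by linarith : (1/4:ℝ) ≤ r),
            max_eq_right (by linarith : (1/2:ℝ) ≤ 2*r)]
          have hr0' : (0:ℝ) < r := by linarith
          field_simp
          ring
        rw [hsc]
    · -- β takes the outer branch
      rw [befc, if_neg h12, (alW D).2.2.1,
        if_neg (show ¬(4*r ≤ 1 + 3*((0:I):ℝ)) by rw [hco]; push_neg; linarith)]
      have he : eF ((0:I):ℝ) r = 2*r - 1 := by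
        rw [hco, eF, max_eq_right (by linarith)]
      have hmax1 : max (1/2 : ℝ) r = r := max_eq_right (by linarith)
      have hmax2 : max (1/4 : ℝ) r = r := max_eq_right (by linarith)
      have hsc : ((2*r - 1) / max (1/2) r : ℝ) = eF ((0:I):ℝ) r / max (1/4) r := by
        rw [he, hmax1, hmax2]
      rw [hsc]

/-! ### The homotopy `β ∘ α ≃ id` on the wedge -/

/-- The profile function for the homotopy on the wedge. -/
noncomputable def eW (t r : ℝ) : ℝ := max 0 (min (4*r - 1 - 3*t) (2 - 2*r))

/-- The underlying jointly continuous map of the wedge homotopy, on a cell. -/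
noncomputable def Gcm (c : D.ι) (g : G) :
    C({v : D.V c // ‖v‖ ≤ 1} × I, Quot (wedgeRel D)) where
  toFun q :=
    if 4*‖q.1.1‖ ≤ 1 + 3*(q.2 : ℝ) then
      Quot.mk _ (Sum.inr ⟨c, g, pB ((4/(1 + 3*(q.2 : ℝ))) • q.1.1)⟩)
    else
      Quot.mk _ (Sum.inl (Xtot.p (D.φ c g
        (pB ((eW (q.2 : ℝ) ‖q.1.1‖ / max (1/4) ‖q.1.1‖) • q.1.1)))))
  continuous_toFun := by
    have hv : Continuous fun q : {v : D.V c // ‖v‖ ≤ 1} × I => q.1.1 :=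
      continuous_subtype_val.comp continuous_fst
    have ht : Continuous fun q : {v : D.V c // ‖v‖ ≤ 1} × I => (q.2 : ℝ) :=
      continuous_subtype_val.comp continuous_snd
    have hden : Continuous fun q : {v : D.V c // ‖v‖ ≤ 1} × I => (1 + 3*(q.2 : ℝ)) :=
      continuous_const.add (continuous_const.mul ht)
    have hden0 : ∀ q : {v : D.V c // ‖v‖ ≤ 1} × I, (1 + 3*(q.2 : ℝ)) ≠ 0 := by
      intro q; have := q.2.2.1; positivity
    apply Continuous.if_le
    · exact continuous_quot_mk.comp (continuous_inr.comp (continuous_sigmaMk.comp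
        (continuous_const.prodMk (pB_cont.comp
          ((continuous_const.div hden hden0).smul hv)))))
    · refine continuous_quot_mk.comp (continuous_inl.comp (Xtot.p_cont.comp
        ((D.φ_cont c g).comp (pB_cont.comp (Continuous.smul ?_ hv)))))
      refine Continuous.div ?_ (continuous_const.max hv.norm)
        (fun q => ne_of_gt (lt_of_lt_of_le (by norm_num) (le_max_left _ _)))
      exact continuous_const.max ((((continuous_const.mul hv.norm).sub
        continuous_const).sub (continuous_const.mul ht)).min
        (continuous_const.sub (continuous_const.mul hv.norm)))
    · exact continuous_const.mul hv.norm
    · exact hden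
    · intro q hq
      set r := ‖q.1.1‖ with hrdef
      have hr4 : (1/4 : ℝ) ≤ r := by nlinarith [q.2.2.1]
      have hr0 : (0:ℝ) < r := by nlinarith
      have h1 : (4/(1 + 3*(q.2 : ℝ)) : ℝ) = 1/r := by
        rw [← hq, div_eq_div_iff (by nlinarith : (4*r:ℝ) ≠ 0) (ne_of_gt hr0)]; ring
      have h2 : (eW (q.2 : ℝ) r / max (1/4) r : ℝ) = 0 := by
        have he : eW (q.2 : ℝ) r = 0 := by
          have h40 : 4*r - 1 - 3*(q.2 : ℝ) = 0 := by linarith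
          rw [eW, h40, min_eq_left (by nlinarith [q.1.2]), max_self]
        rw [he, zero_div]
      have hnorm : ‖(1/r : ℝ) • q.1.1‖ = 1 := by
        rw [norm_smul, Real.norm_eq_abs, abs_of_pos (by positivity), ← hrdef,
          one_div, inv_mul_cancel₀ (ne_of_gt hr0)]
      have hn : ‖(pB ((1/r : ℝ) • q.1.1)).1‖ = 1 := by rw [pB_of_le hnorm.le, hnorm]
      rw [h1, h2, zero_smul, pB_eq_of_le (by simp : ‖(0 : D.V c)‖ ≤ 1),
        W_collapse D c g _ hn]

/-- The wedge homotopy on a cell, as a map into the path space. -/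
noncomputable def Gfc (c : D.ι) (g : G) (v : {v : D.V c // ‖v‖ ≤ 1}) :
    C(I, Quot (wedgeRel D)) :=
  (Gcm D c g).curry v

theorem Gfc_apply (c : D.ι) (g : G) (v : {v : D.V c // ‖v‖ ≤ 1}) (t : I) :
    Gfc D c g v t =
      (if 4*‖v.1‖ ≤ 1 + 3*(t : ℝ) then
        Quot.mk _ (Sum.inr ⟨c, g, pB ((4/(1 + 3*(t : ℝ))) • v.1)⟩)
      else
        Quot.mk _ (Sum.inl (Xtot.p (D.φ c g
          (pB ((eW (t : ℝ) ‖v.1‖ / max (1/4) ‖v.1‖) • v.1)))))) := rfl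

theorem Gfc_ind (c : D.ι) (g : G) (h : ↥(D.Hc c)) (v : {v : D.V c // ‖v‖ ≤ 1}) :
    Gfc D c (g * h) v =
      Gfc D c g ⟨D.ρ c h v.1, by rw [(D.ρ c h).norm_map]; exact v.2⟩ := by
  ext t
  rw [Gfc_apply, Gfc_apply]
  simp only [LinearIsometryEquiv.norm_map]
  by_cases hv : 4*‖v.1‖ ≤ 1 + 3*(t : ℝ)
  · rw [if_pos hv, if_pos hv]
    have := Quot.sound (wedgeRel.ind c g h (pB ((4/(1 + 3*(t : ℝ))) • v.1)))
    rw [this, pB_rho, map_smul]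
  · rw [if_neg hv, if_neg hv, D.φ_ind, pB_rho, map_smul]

theorem Gfc_bd (c : D.ι) (g : G) (v : {v : D.V c // ‖v‖ ≤ 1}) (hv : ‖v.1‖ = 1) :
    Gfc D c g v = ContinuousMap.const I
      (Quot.mk _ (Sum.inl (Xtot.p (D.φ c g ⟨0, by simp⟩)))) := by
  ext t
  rw [Gfc_apply, hv, ContinuousMap.const_apply]
  by_cases hc : 4*(1:ℝ) ≤ 1 + 3*(t : ℝ)
  · have ht : (t : ℝ) = 1 := le_antisymm t.2.2 (by linarith)
    have h1 : (4/(1 + 3*(t : ℝ)) : ℝ) = 1 := by rw [ht]; norm_num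
    rw [if_pos hc, h1, one_smul, pB_eq_of_le v.2, W_collapse D c g v hv]
  · have he : eW (t : ℝ) 1 = 0 := by
      rw [eW, min_eq_right (by nlinarith [t.2.2]),
        show (2 - 2*(1:ℝ)) = 0 by ring, max_self]
    rw [if_neg hc, he, zero_div, zero_smul,
      pB_eq_of_le (by simp : ‖(0 : D.V c)‖ ≤ 1)]

/-- The packaged homotopy on the wedge. -/
noncomputable def GW : {F : Quot (wedgeRel D) → C(I, Quot (wedgeRel D)) //
    Continuous F ∧
    (∀ b, F (Quot.mk _ (Sum.inl b)) =
      ContinuousMap.const I (Quot.mk _ (Sum.inl b))) ∧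
    ∀ c g v, F (Quot.mk _ (Sum.inr ⟨c, g, v⟩)) = Gfc D c g v} :=
  Wbuild D _ (fun b => ContinuousMap.const I (Quot.mk _ (Sum.inl b))) (Gfc D)
    ((map_continuous ContinuousMap.const').comp
      (continuous_quot_mk.comp continuous_inl))
    (fun c g => ((Gcm D c g).curry).continuous)
    (Gfc_ind D) (Gfc_bd D)

theorem GW_one (x : Quot (wedgeRel D)) : (GW D).1 x 1 = x := by
  induction x using Quot.ind with
  | _ u =>
    rcases u with b | ⟨c, g, v⟩
    · rw [(GW D).2.2.1]; rfl
    · have hco : ((1:I):ℝ) = 1 := rfl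
      rw [(GW D).2.2.2, Gfc_apply,
        if_pos (show 4*‖v.1‖ ≤ 1 + 3*((1:I):ℝ) by rw [hco]; nlinarith [v.2]),
        show (4/(1 + 3*((1:I):ℝ)) : ℝ) = 1 by rw [hco]; norm_num,
        one_smul, pB_eq_of_le v.2]

theorem GW_eqv (t : I) (g₀ : G) (x : Quot (wedgeRel D)) :
    (GW D).1 (Quot.lift (fun u => Quot.mk _ (wedgeSmulFun D g₀ u))
      (fun _ _ h => wedgeSmul_sound D g₀ h) x) t =
    Quot.lift (fun u => Quot.mk _ (wedgeSmulFun D g₀ u))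
      (fun _ _ h => wedgeSmul_sound D g₀ h) ((GW D).1 x t) := by
  induction x using Quot.ind with
  | _ u =>
    rcases u with b | ⟨c, g, v⟩
    · show (GW D).1 (Quot.mk _ (Sum.inl (g₀ • b))) t = _
      rw [(GW D).2.2.1, (GW D).2.2.1]; rfl
    · show (GW D).1 (Quot.mk _ (Sum.inr ⟨c, g₀ * g, v⟩)) t = _
      rw [(GW D).2.2.2, (GW D).2.2.2, Gfc_apply, Gfc_apply]
      by_cases hv : 4*‖v.1‖ ≤ 1 + 3*(t : ℝ)
      · rw [if_pos hv, if_pos hv]; rfl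
      · rw [if_neg hv, if_neg hv]
        show Quot.mk _ (Sum.inl (Xtot.p (D.φ c (g₀ * g) _))) =
          Quot.mk _ (Sum.inl (g₀ • Xtot.p (D.φ c g _)))
        rw [D.φ_eqv, Xtot.p_eqv]

theorem GW_zero (x : Quot (wedgeRel D)) :
    (GW D).1 x 0 = (beW D).1 ((alW D).1 x) := by
  induction x using Quot.ind with
  | _ u =>
    rcases u with b | ⟨c, g, v⟩
    · rw [(GW D).2.2.1, (alW D).2.2.1, FQ_incl_s, (beW D).2.2.1, A.p_s]; rfl
    · rw [(GW D).2.2.2, (alW D).2.2.2, Gfc_apply]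
      set r := ‖v.1‖ with hrdef
      have hr0 : 0 ≤ r := norm_nonneg _
      have hr1 : r ≤ 1 := v.2
      have hco : ((0:I):ℝ) = 0 := rfl
      have hs : ‖(2:ℝ) • v.1‖ = 2*r := by rw [norm_smul, Real.norm_ofNat]
      by_cases h12 : r ≤ 1/2
      · -- α takes the inner branch
        rw [alfc, if_pos h12, (beW D).2.2.2]
        have hpb : (pB ((2:ℝ) • v.1)).1 = (2:ℝ) • v.1 :=
          pB_of_le (by rw [norm_smul, Real.norm_ofNat]; linarith)
        have hn2 : ‖(pB ((2:ℝ) • v.1)).1‖ = 2*r := by rw [hpb, hs]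
        by_cases h14 : r ≤ 1/4
        · rw [if_pos (show 4*r ≤ 1 + 3*((0:I):ℝ) by rw [hco]; linarith),
            befc, if_pos (by rw [hn2]; linarith), hpb, smul_smul,
            show ((2:ℝ)*2) = 4/(1 + 3*((0:I):ℝ)) by rw [hco]; norm_num]
        · rw [if_neg (show ¬(4*r ≤ 1 + 3*((0:I):ℝ)) by rw [hco]; push_neg; linarith),
            befc, if_neg (by rw [hn2]; push_neg; linarith), hpb, hs, smul_smul]
          have he : eW ((0:I):ℝ) r = 4*r - 1 := by
            rw [hco, eW, show (4*r - 1 - 3*0 : ℝ) = 4*r - 1 by ring,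
              min_eq_left (by linarith), max_eq_right (by linarith)]
          have hsc : ((2*(2*r) - 1) / max (1/2) (2*r) * 2 : ℝ)
              = eW ((0:I):ℝ) r / max (1/4) r := by
            rw [he, max_eq_right (by linarith : (1/4:ℝ) ≤ r),
              max_eq_right (by linarith : (1/2:ℝ) ≤ 2*r)]
            have hr0' : (0:ℝ) < r := by linarith
            field_simp
            ring
          rw [hsc]
      · -- α takes the outer branch
        rw [alfc, if_neg h12, FQ_incl_s, (beW D).2.2.1, A.p_s,
          if_neg (show ¬(4*r ≤ 1 + 3*((0:I):ℝ)) by rw [hco]; push_neg; linarith)]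
        have he : eW ((0:I):ℝ) r = 2 - 2*r := by
          rw [hco, eW, show (4*r - 1 - 3*0 : ℝ) = 4*r - 1 by ring,
            min_eq_right (by linarith), max_eq_right (by linarith)]
        have hmax1 : max (1/2 : ℝ) r = r := max_eq_right (by linarith)
        have hmax2 : max (1/4 : ℝ) r = r := max_eq_right (by linarith)
        have hsc : ((2 - 2*r) / max (1/2) r : ℝ) = eW ((0:I):ℝ) r / max (1/4) r := by
          rw [he, hmax1, hmax2]
        rw [hsc]

/-! ### The projection homotopy for `α` -/

/-- radial profile of `α`. -/
noncomputable def etaA (c : D.ι) (v : {v : D.V c // ‖v‖ ≤ 1}) : D.V c :=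
  if ‖v.1‖ ≤ 1/2 then (2:ℝ) • v.1
  else ((2 - 2*‖v.1‖) / max (1/2) ‖v.1‖) • v.1

theorem etaA_cont (c : D.ι) : Continuous (etaA D c) := by
  apply Continuous.if_le
  · exact continuous_const.smul continuous_subtype_val
  · exact Continuous.smul
      (((continuous_const.sub (continuous_const.mul continuous_subtype_val.norm)).div
        (continuous_const.max continuous_subtype_val.norm)
        (fun v => ne_of_gt (lt_of_lt_of_le (by norm_num) (le_max_left _ _)))))
      continuous_subtype_val
  · exact continuous_subtype_val.norm
  · exact continuous_const
  · intro v hv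
    rw [hv, show ((2 - 2*(1/2 : ℝ)) / max (1/2) (1/2) : ℝ) = 2 by norm_num]

theorem etaA_rho (c : D.ι) (h : ↥(D.Hc c)) (v : {v : D.V c // ‖v‖ ≤ 1}) :
    etaA D c ⟨D.ρ c h v.1, by rw [(D.ρ c h).norm_map]; exact v.2⟩
      = D.ρ c h (etaA D c v) := by
  simp only [etaA, LinearIsometryEquiv.norm_map]
  by_cases hv : ‖v.1‖ ≤ 1/2
  · rw [if_pos hv, if_pos hv, map_smul]
  · rw [if_neg hv, if_neg hv, map_smul]

/-- the projection homotopy of `α`, on a cell. -/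
noncomputable def hAcm (c : D.ι) (g : G) : C({v : D.V c // ‖v‖ ≤ 1} × I, B) where
  toFun q := Xtot.p (D.φ c g (pB ((1 - (q.2:ℝ)) • etaA D c q.1)))
  continuous_toFun := by
    refine Xtot.p_cont.comp ((D.φ_cont c g).comp (pB_cont.comp (Continuous.smul ?_
      ((etaA_cont D c).comp continuous_fst))))
    exact continuous_const.sub (continuous_subtype_val.comp continuous_snd)

noncomputable def hAfc (c : D.ι) (g : G) (v : {v : D.V c // ‖v‖ ≤ 1}) : C(I, B) :=
  (hAcm D c g).curry v

theorem hAfc_apply (c : D.ι) (g : G) (v : {v : D.V c // ‖v‖ ≤ 1}) (t : I) :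
    hAfc D c g v t = Xtot.p (D.φ c g (pB ((1 - (t:ℝ)) • etaA D c v))) := rfl

theorem hAfc_ind (c : D.ι) (g : G) (h : ↥(D.Hc c)) (v : {v : D.V c // ‖v‖ ≤ 1}) :
    hAfc D c (g * h) v =
      hAfc D c g ⟨D.ρ c h v.1, by rw [(D.ρ c h).norm_map]; exact v.2⟩ := by
  ext t
  rw [hAfc_apply, hAfc_apply, etaA_rho, D.φ_ind, pB_rho, map_smul]

theorem hAfc_bd (c : D.ι) (g : G) (v : {v : D.V c // ‖v‖ ≤ 1}) (hv : ‖v.1‖ = 1) :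
    hAfc D c g v = ContinuousMap.const I (Xtot.p (D.φ c g ⟨0, by simp⟩)) := by
  ext t
  rw [hAfc_apply, ContinuousMap.const_apply]
  have he : etaA D c v = 0 := by
    rw [etaA, if_neg (by rw [hv]; norm_num), hv,
      show ((2 - 2*(1:ℝ)) / max (1/2) 1 : ℝ) = 0 by norm_num, zero_smul]
  rw [he, smul_zero, pB_eq_of_le (by simp : ‖(0 : D.V c)‖ ≤ 1)]

/-- The packaged projection homotopy for `α`. -/
noncomputable def alHW : {F : Quot (wedgeRel D) → C(I, B) //
    Continuous F ∧
    (∀ b, F (Quot.mk _ (Sum.inl b)) = ContinuousMap.const I b) ∧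
    ∀ c g v, F (Quot.mk _ (Sum.inr ⟨c, g, v⟩)) = hAfc D c g v} :=
  Wbuild D _ (fun b => ContinuousMap.const I b) (hAfc D)
    (map_continuous ContinuousMap.const')
    (fun c g => ((hAcm D c g).curry).continuous)
    (hAfc_ind D) (hAfc_bd D)

/-- equivariance of `α`. -/
theorem alW_eqv (g₀ : G) (x : Quot (wedgeRel D)) :
    (alW D).1 (Quot.lift (fun u => Quot.mk _ (wedgeSmulFun D g₀ u))
      (fun _ _ h => wedgeSmul_sound D g₀ h) x) =
    quotSmul D g₀ ((alW D).1 x) := by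
  induction x using Quot.ind with
  | _ u =>
    rcases u with b | ⟨c, g, v⟩
    · show (alW D).1 (Quot.mk _ (Sum.inl (g₀ • b))) = _
      rw [(alW D).2.2.1, (alW D).2.2.1]
      show Quot.mk _ (Xtot.s (g₀ • b)) = Quot.mk _ (g₀ • Xtot.s b)
      rw [Xtot.s_eqv]
    · show (alW D).1 (Quot.mk _ (Sum.inr ⟨c, g₀ * g, v⟩)) = _
      rw [(alW D).2.2.2, (alW D).2.2.2]
      unfold alfc
      by_cases hv : ‖v.1‖ ≤ 1/2
      · rw [if_pos hv, if_pos hv]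
        show Quot.mk _ (D.φ c (g₀ * g) _) = Quot.mk _ (g₀ • D.φ c g _)
        rw [D.φ_eqv]
      · rw [if_neg hv, if_neg hv]
        show Quot.mk _ (Xtot.s (Xtot.p (D.φ c (g₀ * g) _))) =
          Quot.mk _ (g₀ • Xtot.s (Xtot.p (D.φ c g _)))
        rw [D.φ_eqv, Xtot.p_eqv, Xtot.s_eqv]

/-- equivariance of the projection homotopy of `α`. -/
theorem alHW_eqv (t : I) (g₀ : G) (x : Quot (wedgeRel D)) :
    (alHW D).1 (Quot.lift (fun u => Quot.mk _ (wedgeSmulFun D g₀ u))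
      (fun _ _ h => wedgeSmul_sound D g₀ h) x) t =
    g₀ • ((alHW D).1 x t) := by
  induction x using Quot.ind with
  | _ u =>
    rcases u with b | ⟨c, g, v⟩
    · show (alHW D).1 (Quot.mk _ (Sum.inl (g₀ • b))) t = _
      rw [(alHW D).2.2.1, (alHW D).2.2.1]; rfl
    · show (alHW D).1 (Quot.mk _ (Sum.inr ⟨c, g₀ * g, v⟩)) t = _
      rw [(alHW D).2.2.2, (alHW D).2.2.2, hAfc_apply, hAfc_apply, D.φ_eqv,
        Xtot.p_eqv]

theorem alHW_zero (x : Quot (wedgeRel D)) :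
    (alHW D).1 x 0 = Quot.lift Xtot.p (fun u v h => by
      obtain ⟨a₁, a₂, hu, hv, hp⟩ := h
      rw [hu, hv, D.incl_p, D.incl_p, hp]) ((alW D).1 x) := by
  induction x using Quot.ind with
  | _ u =>
    rcases u with b | ⟨c, g, v⟩
    · rw [(alHW D).2.2.1, (alW D).2.2.1]
      show b = Xtot.p (Xtot.s b)
      rw [Xtot.p_s]
    · rw [(alHW D).2.2.2, (alW D).2.2.2, hAfc_apply,
        show ((1:ℝ) - ((0:I):ℝ)) = 1 from by norm_num [show ((0:I):ℝ) = 0 from rfl],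
        one_smul]
      unfold alfc etaA
      by_cases hv : ‖v.1‖ ≤ 1/2
      · rw [if_pos hv, if_pos hv]
      · rw [if_neg hv, if_neg hv]
        show Xtot.p (D.φ c g _) = Xtot.p (Xtot.s (Xtot.p (D.φ c g _)))
        rw [Xtot.p_s]

theorem alHW_one (x : Quot (wedgeRel D)) :
    (alHW D).1 x 1 = Quot.lift (wedgeProjFun D) (fun _ _ h => wedgeProj_sound D h) x := by
  induction x using Quot.ind with
  | _ u =>
    rcases u with b | ⟨c, g, v⟩
    · rw [(alHW D).2.2.1]; rfl
    · rw [(alHW D).2.2.2, hAfc_apply,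
        show ((1:ℝ) - ((1:I):ℝ)) = 0 from by norm_num [show ((1:I):ℝ) = 1 from rfl],
        zero_smul, pB_eq_of_le (by simp : ‖(0 : D.V c)‖ ≤ 1)]
      rfl

/-! ### The projection homotopy for `β` -/

/-- radial profile of `β`. -/
noncomputable def thB (c : D.ι) (v : {v : D.V c // ‖v‖ ≤ 1}) : D.V c :=
  if ‖v.1‖ ≤ 1/2 then 0
  else ((2*‖v.1‖ - 1) / max (1/2) ‖v.1‖) • v.1

theorem thB_cont (c : D.ι) : Continuous (thB D c) := by
  apply Continuous.if_le
  · exact continuous_const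
  · exact Continuous.smul
      ((((continuous_const.mul continuous_subtype_val.norm).sub continuous_const).div
        (continuous_const.max continuous_subtype_val.norm)
        (fun v => ne_of_gt (lt_of_lt_of_le (by norm_num) (le_max_left _ _)))))
      continuous_subtype_val
  · exact continuous_subtype_val.norm
  · exact continuous_const
  · intro v hv
    rw [hv, show ((2*(1/2 : ℝ) - 1) / max (1/2) (1/2) : ℝ) = 0 by norm_num, zero_smul]

theorem thB_rho (c : D.ι) (h : ↥(D.Hc c)) (v : {v : D.V c // ‖v‖ ≤ 1}) :
    thB D c ⟨D.ρ c h v.1, by rw [(D.ρ c h).norm_map]; exact v.2⟩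
      = D.ρ c h (thB D c v) := by
  simp only [thB, LinearIsometryEquiv.norm_map]
  by_cases hv : ‖v.1‖ ≤ 1/2
  · rw [if_pos hv, if_pos hv, map_zero]
  · rw [if_neg hv, if_neg hv, map_smul]

/-- the projection homotopy of `β`, on a cell. -/
noncomputable def hBcm (c : D.ι) (g : G) : C({v : D.V c // ‖v‖ ≤ 1} × I, B) where
  toFun q := Xtot.p (D.φ c g (pB ((1 - (q.2:ℝ)) • thB D c q.1 + (q.2:ℝ) • q.1.1)))
  continuous_toFun := by
    refine Xtot.p_cont.comp ((D.φ_cont c g).comp (pB_cont.comp (Continuous.add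
      (Continuous.smul ?_ ((thB_cont D c).comp continuous_fst))
      (Continuous.smul (continuous_subtype_val.comp continuous_snd)
        (continuous_subtype_val.comp continuous_fst)))))
    exact continuous_const.sub (continuous_subtype_val.comp continuous_snd)

noncomputable def hBfc (c : D.ι) (g : G) (v : {v : D.V c // ‖v‖ ≤ 1}) : C(I, B) :=
  (hBcm D c g).curry v

theorem hBfc_apply (c : D.ι) (g : G) (v : {v : D.V c // ‖v‖ ≤ 1}) (t : I) :
    hBfc D c g v t =
      Xtot.p (D.φ c g (pB ((1 - (t:ℝ)) • thB D c v + (t:ℝ) • v.1))) := rfl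

theorem hBfc_ind (c : D.ι) (g : G) (h : ↥(D.Hc c)) (v : {v : D.V c // ‖v‖ ≤ 1}) :
    hBfc D c (g * h) v =
      hBfc D c g ⟨D.ρ c h v.1, by rw [(D.ρ c h).norm_map]; exact v.2⟩ := by
  ext t
  rw [hBfc_apply, hBfc_apply, thB_rho, D.φ_ind, pB_rho]
  congr 2
  rw [map_add, map_smul, map_smul]

theorem hBfc_bd (c : D.ι) (g : G) (v : {v : D.V c // ‖v‖ ≤ 1}) (hv : ‖v.1‖ = 1) :
    hBfc D c g v = ContinuousMap.const I (A.p (D.attach c g v)) := by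
  ext t
  rw [hBfc_apply, ContinuousMap.const_apply]
  have he : thB D c v = v.1 := by
    rw [thB, if_neg (by rw [hv]; norm_num), hv,
      show ((2*(1:ℝ) - 1) / max (1/2) 1 : ℝ) = 1 by norm_num, one_smul]
  rw [he, ← add_smul, sub_add_cancel, one_smul, pB_eq_of_le v.2,
    D.φ_bdry c g v hv, D.incl_p]

/-- The packaged projection homotopy for `β`. -/
noncomputable def beHW : {F : Quot (quotRel D) → C(I, B) //
    Continuous F ∧
    (∀ a, F (Quot.mk _ (D.incl a)) = ContinuousMap.const I (A.p a)) ∧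
    ∀ c g v, F (Quot.mk _ (D.φ c g v)) = hBfc D c g v} :=
  FQbuild D _ (fun a => ContinuousMap.const I (A.p a)) (hBfc D)
    ((map_continuous ContinuousMap.const').comp A.p_cont)
    (fun c g => ((hBcm D c g).curry).continuous)
    (hBfc_ind D) (hBfc_bd D)
    (fun a₁ a₂ hp => by rw [hp])

/-- equivariance of `β`. -/
theorem beW_eqv (g₀ : G) (x : Quot (quotRel D)) :
    (beW D).1 (quotSmul D g₀ x) =
    Quot.lift (fun u => Quot.mk _ (wedgeSmulFun D g₀ u))
      (fun _ _ h => wedgeSmul_sound D g₀ h) ((beW D).1 x) := by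
  rcases FQ_cases D x with ⟨a, rfl⟩ | ⟨c, g, v, rfl⟩
  · show (beW D).1 (Quot.mk _ (g₀ • D.incl a)) = _
    rw [← D.incl_eqv, (beW D).2.2.1, (beW D).2.2.1]
    show Quot.mk _ (Sum.inl (A.p (g₀ • a))) = Quot.mk _ (Sum.inl (g₀ • A.p a))
    rw [A.p_eqv]
  · show (beW D).1 (Quot.mk _ (g₀ • D.φ c g v)) = _
    rw [← D.φ_eqv, (beW D).2.2.2, (beW D).2.2.2]
    unfold befc
    by_cases hv : ‖v.1‖ ≤ 1/2
    · rw [if_pos hv, if_pos hv]; rfl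
    · rw [if_neg hv, if_neg hv]
      show Quot.mk _ (Sum.inl (Xtot.p (D.φ c (g₀ * g) _))) =
        Quot.mk _ (Sum.inl (g₀ • Xtot.p (D.φ c g _)))
      rw [D.φ_eqv, Xtot.p_eqv]

/-- equivariance of the projection homotopy of `β`. -/
theorem beHW_eqv (t : I) (g₀ : G) (x : Quot (quotRel D)) :
    (beHW D).1 (quotSmul D g₀ x) t = g₀ • ((beHW D).1 x t) := by
  rcases FQ_cases D x with ⟨a, rfl⟩ | ⟨c, g, v, rfl⟩
  · show (beHW D).1 (Quot.mk _ (g₀ • D.incl a)) t = _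
    rw [← D.incl_eqv, (beHW D).2.2.1, (beHW D).2.2.1]
    show A.p (g₀ • a) = g₀ • A.p a
    rw [A.p_eqv]
  · show (beHW D).1 (Quot.mk _ (g₀ • D.φ c g v)) t = _
    rw [← D.φ_eqv, (beHW D).2.2.2, (beHW D).2.2.2, hBfc_apply, hBfc_apply,
      D.φ_eqv, Xtot.p_eqv]

theorem beHW_zero (x : Quot (quotRel D)) :
    (beHW D).1 x 0 = Quot.lift (wedgeProjFun D) (fun _ _ h => wedgeProj_sound D h)
      ((beW D).1 x) := by
  rcases FQ_cases D x with ⟨a, rfl⟩ | ⟨c, g, v, rfl⟩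
  · rw [(beHW D).2.2.1, (beW D).2.2.1]; rfl
  · rw [(beHW D).2.2.2, (beW D).2.2.2, hBfc_apply,
      show ((1:ℝ) - ((0:I):ℝ)) = 1 from by norm_num [show ((0:I):ℝ) = 0 from rfl],
      one_smul, show ((0:I):ℝ) = 0 from rfl, zero_smul, add_zero]
    unfold befc thB
    by_cases hv : ‖v.1‖ ≤ 1/2
    · rw [if_pos hv, if_pos hv, pB_eq_of_le (by simp : ‖(0 : D.V c)‖ ≤ 1)]
      rfl
    · rw [if_neg hv, if_neg hv]
      rfl

theorem beHW_one (x : Quot (quotRel D)) :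
    (beHW D).1 x 1 = Quot.lift Xtot.p (fun u v h => by
      obtain ⟨a₁, a₂, hu, hv, hp⟩ := h
      rw [hu, hv, D.incl_p, D.incl_p, hp]) x := by
  rcases FQ_cases D x with ⟨a, rfl⟩ | ⟨c, g, v, rfl⟩
  · rw [(beHW D).2.2.1]
    show A.p a = Xtot.p (D.incl a)
    rw [D.incl_p]
  · rw [(beHW D).2.2.2, hBfc_apply,
      show ((1:ℝ) - ((1:I):ℝ)) = 0 from by norm_num [show ((1:I):ℝ) = 1 from rfl],
      zero_smul, show ((1:I):ℝ) = 1 from rfl, one_smul, zero_add, pB_eq_of_le v.2]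

end spaces

/-- Costenoble–Waner, Lemma 3.3.2: the filtration quotient of an ex-CW(γ)-complex is
lax homotopy equivalent over `B` to the fiberwise wedge of the parametrized spheres
`G₊ ∧_{H_c} S^{V_c, p∘x_c}` indexed by the `(γ+n)`-cells. -/
theorem stmt12 {A Xtot : ExSp G B} {n : ℕ} (D : AttachData G B A Xtot n) :
    IsLaxHtpyEquiv (fibQuot D) (wedgeSp D) := by
  refine ⟨
    { f := (beW D).1
      cont := (beW D).2.1
      eqv := fun g a => beW_eqv D g a
      sect := fun b => by
        show (beW D).1 (Quot.mk _ (Xtot.s b)) = _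
        rw [FQ_incl_s, (beW D).2.2.1, A.p_s]
        rfl
      proj := ⟨fun t x => (beHW D).1 x t,
        cont_eval _ (beHW D).2.1,
        fun t g a => beHW_eqv D t g a,
        fun a => beHW_zero D a,
        fun a => beHW_one D a,
        fun t b => by
          show (beHW D).1 (Quot.mk _ (Xtot.s b)) t = b
          rw [FQ_incl_s, (beHW D).2.2.1]
          show A.p (A.s b) = b
          rw [A.p_s]⟩ },
    { f := (alW D).1
      cont := (alW D).2.1
      eqv := fun g a => alW_eqv D g a
      sect := fun b => (alW D).2.2.1 b
      proj := ⟨fun t x => (alHW D).1 x t,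
        cont_eval _ (alHW D).2.1,
        fun t g a => alHW_eqv D t g a,
        fun a => alHW_zero D a,
        fun a => alHW_one D a,
        fun t b => by
          show (alHW D).1 (Quot.mk _ (Sum.inl b)) t = b
          rw [(alHW D).2.2.1]
          rfl⟩ },
    ⟨fun t x => (HFQ D).1 x t,
      cont_eval _ (HFQ D).2.1,
      fun t g a => HFQ_eqv D t g a,
      fun a => HFQ_zero D a,
      fun a => HFQ_one D a,
      fun t b => HFQ_sect D t b⟩,
    ⟨fun t x => (GW D).1 x t,
      cont_eval _ (GW D).2.1,
      fun t g a => GW_eqv D t g a,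
      fun a => GW_zero D a,
      fun a => GW_one D a,
      fun t b => by
        show (GW D).1 (Quot.mk _ (Sum.inl b)) t = _
        rw [(GW D).2.2.1]
        rfl⟩⟩
end
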